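/- arXiv:1207.2238 — 7 statements merged into one kernel-verified Lean document; each statement's English description precedes it below -/
import Mathlib

section
/- If f, g : [0,∞) → (0,∞) both tend to +∞ at infinity and the function W(f(x)) − W(g(x)) is bounded above on [0,∞), then limsup_{x→∞} f(x)/g(x) ≤ 1. -/
/-!
Since `w` is non-decreasing, `1 / w u ≥ 1 / w (λ y)` for `u ∈ [y, λ y]`, so
`W (λ y) - W y ≥ (λ - 1) y / w (λ y) = (1 - 1/λ) ℓ (λ y)`, which tends to `∞` with `y`
for every `λ > 1`. If `f x > λ g x` happened for arbitrarily large `x`, monotonicity of `W`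
would give `W (f x) - W (g x) ≥ W (λ g x) - W (g x) → ∞`, against the upper bound.
Hence `f / g ≤ λ` eventually, for every `λ > 1`.
-/

open Filter MeasureTheory

section MonotoneWeight

variable {w W : ℝ → ℝ}

theorem antitoneOn_one_div_of_monotoneOn (hw_pos : ∀ x, 0 ≤ x → 0 < w x)
    (hw_mono : MonotoneOn w (Set.Ici 0)) :
    AntitoneOn (fun u => 1 / w u) (Set.Ici 0) :=
  fun _ hu _ hv huv => one_div_le_one_div_of_le (hw_pos _ hu) (hw_mono hu hv huv)

theorem intervalIntegrable_one_div_of_monotoneOn (hw_pos : ∀ x, 0 ≤ x → 0 < w x)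
    (hw_mono : MonotoneOn w (Set.Ici 0)) {a b : ℝ} (ha : 0 ≤ a) (hb : 0 ≤ b) :
    IntervalIntegrable (fun u => 1 / w u) volume a b :=
  AntitoneOn.intervalIntegrable <|
    (antitoneOn_one_div_of_monotoneOn hw_pos hw_mono).mono fun _ hu =>
      le_trans (le_min ha hb) hu.1

theorem sub_div_le_integral_one_div (hw_pos : ∀ x, 0 ≤ x → 0 < w x)
    (hw_mono : MonotoneOn w (Set.Ici 0)) {a b : ℝ} (ha : 0 ≤ a) (hab : a ≤ b) :
    (b - a) / w b ≤ ∫ u in a..b, 1 / w u := by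
  have hb : 0 ≤ b := ha.trans hab
  calc (b - a) / w b = ∫ _ in a..b, 1 / w b := by simp [div_eq_mul_one_div (b - a)]
    _ ≤ ∫ u in a..b, 1 / w u :=
      intervalIntegral.integral_mono_on hab intervalIntegrable_const
        (intervalIntegrable_one_div_of_monotoneOn hw_pos hw_mono ha hb)
        fun u hu => antitoneOn_one_div_of_monotoneOn hw_pos hw_mono
          (ha.trans hu.1) hb hu.2

theorem sub_div_le_sub_of_integral (hw_pos : ∀ x, 0 ≤ x → 0 < w x)
    (hw_mono : MonotoneOn w (Set.Ici 0)) (hW : ∀ x, W x = ∫ u in (0:ℝ)..x, 1 / w u)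
    {a b : ℝ} (ha : 0 ≤ a) (hab : a ≤ b) :
    (b - a) / w b ≤ W b - W a := by
  have hint {c : ℝ} (hc : 0 ≤ c) : IntervalIntegrable (fun u => 1 / w u) volume 0 c :=
    intervalIntegrable_one_div_of_monotoneOn hw_pos hw_mono le_rfl hc
  rw [hW, hW, intervalIntegral.integral_interval_sub_left (hint (ha.trans hab)) (hint ha)]
  exact sub_div_le_integral_one_div hw_pos hw_mono ha hab

theorem monotoneOn_of_integral (hw_pos : ∀ x, 0 ≤ x → 0 < w x)
    (hw_mono : MonotoneOn w (Set.Ici 0)) (hW : ∀ x, W x = ∫ u in (0:ℝ)..x, 1 / w u) :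
    MonotoneOn W (Set.Ici 0) := fun _ ha b _ hab =>
  sub_nonneg.mp <| (div_nonneg (sub_nonneg.mpr hab) (hw_pos b (ha.trans hab)).le).trans
    (sub_div_le_sub_of_integral hw_pos hw_mono hW ha hab)

theorem sub_one_div_mul_le_sub_of_integral (hw_pos : ∀ x, 0 ≤ x → 0 < w x)
    (hw_mono : MonotoneOn w (Set.Ici 0)) (hW : ∀ x, W x = ∫ u in (0:ℝ)..x, 1 / w u)
    {ℓ : ℝ → ℝ} (hwl : ∀ x, 0 < x → w x = x / ℓ x) {l y : ℝ} (hl : 1 ≤ l)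
    (hy : 0 < y) :
    (l - 1) / l * ℓ (l * y) ≤ W (l * y) - W y := by
  have hly : 0 < l * y := by positivity
  calc (l - 1) / l * ℓ (l * y) = (l * y - y) / w (l * y) := by
        rw [hwl _ hly, div_div_eq_mul_div]; field_simp
    _ ≤ W (l * y) - W y :=
      sub_div_le_sub_of_integral hw_pos hw_mono hW hy.le (le_mul_of_one_le_left hy.le hl)

theorem tendsto_sub_of_integral (hw_pos : ∀ x, 0 ≤ x → 0 < w x)
    (hw_mono : MonotoneOn w (Set.Ici 0)) (hW : ∀ x, W x = ∫ u in (0:ℝ)..x, 1 / w u)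
    {ℓ : ℝ → ℝ} (hwl : ∀ x, 0 < x → w x = x / ℓ x) (hl_inf : Tendsto ℓ atTop atTop)
    {l : ℝ} (hl : 1 < l) :
    Tendsto (fun y => W (l * y) - W y) atTop atTop := by
  have hlower : Tendsto (fun y => (l - 1) / l * ℓ (l * y)) atTop atTop :=
    (hl_inf.comp (tendsto_id.const_mul_atTop (by linarith))).const_mul_atTop
      (div_pos (by linarith) (by linarith))
  refine tendsto_atTop_mono' atTop ?_ hlower
  filter_upwards [eventually_gt_atTop 0] with y hy
  exact sub_one_div_mul_le_sub_of_integral hw_pos hw_mono hW hwl hl.le hy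

end MonotoneWeight

theorem eventually_le_mul_of_sub_le {W f g : ℝ → ℝ} (hW_mono : MonotoneOn W (Set.Ici 0))
    {l : ℝ} (hl : 0 ≤ l) (hW_sub : Tendsto (fun y => W (l * y) - W y) atTop atTop)
    (hg_inf : Tendsto g atTop atTop) {C : ℝ} (hC : ∀ᶠ x in atTop, W (f x) - W (g x) ≤ C) :
    ∀ᶠ x in atTop, f x ≤ l * g x := by
  filter_upwards [hg_inf.eventually_ge_atTop 0, (hW_sub.comp hg_inf).eventually_gt_atTop C, hC]
    with x hgx hCx hfgx
  by_contra! hfx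
  have hlg : 0 ≤ l * g x := mul_nonneg hl hgx
  have hWfx : W (l * g x) ≤ W (f x) := hW_mono hlg (hlg.trans hfx.le) hfx.le
  linarith [show C < W (l * g x) - W (g x) from hCx]

theorem bddAbove_W_diff_implies_limsup_le_one_general
(w ℓ W : ℝ → ℝ)
    (hw_pos : ∀ x, 0 ≤ x → 0 < w x)
    (hw_mono : MonotoneOn w (Set.Ici 0))
    (hwl : ∀ x, 0 < x → w x = x / ℓ x)
    (hl_inf : Tendsto ℓ atTop atTop)
    (hW : ∀ x, W x = ∫ u in (0:ℝ)..x, 1 / w u)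
    (f g : ℝ → ℝ)
    (hf_pos : ∀ x, 0 ≤ x → 0 < f x)
    (hg_inf : Tendsto g atTop atTop)
    (hbdd : ∃ C : ℝ, ∀ x, 0 ≤ x → W (f x) - W (g x) ≤ C) :
    limsup (fun x => f x / g x) atTop ≤ 1 := by
  obtain ⟨C, hC⟩ := hbdd
  have hg_eventually_pos : ∀ᶠ x in atTop, 0 < g x := hg_inf.eventually_gt_atTop 0
  have hcob : IsCoboundedUnder (· ≤ ·) atTop (fun x => f x / g x) :=
    isCoboundedUnder_le_of_eventually_le atTop (x := 0) <| by
      filter_upwards [eventually_ge_atTop 0, hg_eventually_pos] with x hx hgx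
      exact (div_pos (hf_pos x hx) hgx).le
  refine le_of_forall_gt_imp_ge_of_dense fun l hl => limsup_le_of_le hcob ?_
  filter_upwards [hg_eventually_pos,
    eventually_le_mul_of_sub_le (monotoneOn_of_integral hw_pos hw_mono hW) (by linarith)
      (tendsto_sub_of_integral hw_pos hw_mono hW hwl hl_inf hl) hg_inf
      ((eventually_ge_atTop 0).mono hC)]
    with x hgx hfx
  exact (div_le_iff₀ hgx).mpr hfx

/-- If `f, g` are positive, tend to `+∞`, and `W(f(x)) − W(g(x))` is bounded above
on `[0,∞)`, then `limsup f(x)/g(x) ≤ 1`. -/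
theorem bddAbove_W_diff_implies_limsup_le_one
(w ℓ W : ℝ → ℝ)
    (hw_cont : ContinuousOn w (Set.Ici 0))
    (hw_pos : ∀ x, 0 ≤ x → 0 < w x)
    (hw_mono : MonotoneOn w (Set.Ici 0))
    (hwl : ∀ x, 0 < x → w x = x / ℓ x)
    (hl_slow : ∀ c, 0 < c → Tendsto (fun x => ℓ (c * x) / ℓ x) atTop (nhds 1))
    (hl_inf : Tendsto ℓ atTop atTop)
    (hW : ∀ x, W x = ∫ u in (0:ℝ)..x, 1 / w u)
    (f g : ℝ → ℝ)
    (hf_pos : ∀ x, 0 ≤ x → 0 < f x) (hg_pos : ∀ x, 0 ≤ x → 0 < g x)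
    (hf_inf : Tendsto f atTop atTop) (hg_inf : Tendsto g atTop atTop)
    (hbdd : ∃ C : ℝ, ∀ x, 0 ≤ x → W (f x) - W (g x) ≤ C) :
    limsup (fun x => f x / g x) atTop ≤ 1 :=
  bddAbove_W_diff_implies_limsup_le_one_general w ℓ W hw_pos hw_mono hwl hl_inf hW f g hf_pos hg_inf
    hbdd
end

section
/- If f, g : [0,∞) → (0,∞) both tend to +∞ at infinity and |W(f(x)) − W(g(x))| is bounded on [0,∞), then f(x)/g(x) → 1 as x → ∞. -/
/-!
Since `w u = u / ℓ u`, the density of `W` is `ℓ u / u`, so `W (c * y) - W y ≥ (inf_{u ≥ y} ℓ u) * log c`,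
which tends to infinity for every `c > 1` because `ℓ → ∞`. As `W` is increasing, a bounded difference
`W (f x) - W (g x)` is therefore incompatible with `f x > c * g x` (or `g x > c * f x`) for large `x`,
which squeezes `f x / g x` into `[1 / c, c]` eventually.
-/

open Filter MeasureTheory Set Topology

lemma tendsto_div_of_forall_le_mul {α : Type*} {l : Filter α} {f g : α → ℝ}
    (hg : ∀ᶠ x in l, 0 < g x) (hfg : ∀ c > 1, ∀ᶠ x in l, f x ≤ c * g x)
    (hgf : ∀ c > 1, ∀ᶠ x in l, g x ≤ c * f x) :
    Tendsto (fun x => f x / g x) l (𝓝 1) := by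
  rw [Metric.tendsto_nhds]
  intro ε hε
  have hc : 1 < 1 + ε / 2 := by linarith
  filter_upwards [hg, hfg _ hc, hgf _ hc] with x hgx hf_le hg_le
  have hupper : f x / g x ≤ 1 + ε / 2 := (div_le_iff₀ hgx).2 hf_le
  have hlower : 1 - ε / 2 ≤ f x / g x := by
    rw [le_div_iff₀ hgx]
    nlinarith [mul_nonneg hgx.le (sq_nonneg (ε / 2))]
  rw [Real.dist_eq, abs_sub_lt_iff]
  constructor <;> linarith

lemma eventually_le_mul_of_sub_le_s3 {α : Type*} {l : Filter α} {W : ℝ → ℝ} {f g : α → ℝ} {C c : ℝ}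
    (hW : MonotoneOn W (Ici 0)) (hc : 0 < c)
    (hgap : Tendsto (fun y => W (c * y) - W y) atTop atTop) (hg : Tendsto g l atTop)
    (hbdd : ∀ᶠ x in l, W (f x) - W (g x) ≤ C) :
    ∀ᶠ x in l, f x ≤ c * g x := by
  filter_upwards [hg.eventually (hgap.eventually_gt_atTop C), hg.eventually_ge_atTop 0, hbdd]
    with x hgap_x hg0 hbdd_x
  by_contra! hlt
  have hcg : (0 : ℝ) ≤ c * g x := mul_nonneg hc.le hg0
  have := hW hcg (hcg.trans hlt.le) hlt.le
  linarith

theorem tendsto_div_of_abs_sub_le {α : Type*} {l : Filter α} {W : ℝ → ℝ} {f g : α → ℝ} {C : ℝ}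
    (hW : MonotoneOn W (Ici 0))
    (hgap : ∀ c > 1, Tendsto (fun y => W (c * y) - W y) atTop atTop)
    (hf : Tendsto f l atTop) (hg : Tendsto g l atTop)
    (hbdd : ∀ᶠ x in l, |W (f x) - W (g x)| ≤ C) :
    Tendsto (fun x => f x / g x) l (𝓝 1) :=
  tendsto_div_of_forall_le_mul (hg.eventually_gt_atTop 0)
    (fun c hc => eventually_le_mul_of_sub_le_s3 hW (by linarith) (hgap c hc) hg <|
      hbdd.mono fun _ h => (le_abs_self _).trans h)
    (fun c hc => eventually_le_mul_of_sub_le_s3 hW (by linarith) (hgap c hc) hf <|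
      hbdd.mono fun _ h => (le_abs_self _).trans ((abs_sub_comm _ _).trans_le h))

lemma monotoneOn_integral_of_nonneg {φ : ℝ → ℝ} (hφ : ContinuousOn φ (Ici 0))
    (h0 : ∀ u, 0 ≤ u → 0 ≤ φ u) :
    MonotoneOn (fun x => ∫ u in (0 : ℝ)..x, φ u) (Ici 0) := by
  intro a ha b hb hab
  refine intervalIntegral.integral_mono_interval le_rfl ha hab ?_
    ((hφ.mono fun u hu => ?_).intervalIntegrable)
  · exact (ae_restrict_iff' measurableSet_Ioc).2 (Eventually.of_forall fun u hu => h0 u hu.1.le)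
  · exact le_trans (le_min le_rfl hb) hu.1

lemma mul_log_le_integral {φ : ℝ → ℝ} {M y c : ℝ} (hy : 0 < y) (hc : 1 ≤ c)
    (hφ : IntervalIntegrable φ volume y (c * y)) (hle : ∀ u ∈ Icc y (c * y), M / u ≤ φ u) :
    M * Real.log c ≤ ∫ u in y..c * y, φ u := by
  have hyc : y ≤ c * y := le_mul_of_one_le_left hy.le hc
  have hcy : 0 < c * y := hy.trans_le hyc
  calc M * Real.log c = ∫ u in y..c * y, M / u := by
        simp_rw [div_eq_mul_inv]
        rw [intervalIntegral.integral_const_mul, integral_inv_of_pos hy hcy,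
          mul_div_cancel_right₀ _ hy.ne']
    _ ≤ ∫ u in y..c * y, φ u := by
        refine intervalIntegral.integral_mono_on hyc ?_ hφ hle
        exact (continuousOn_const.div continuousOn_id fun u hu =>
          (hy.trans_le (by simpa [hyc] using hu.1)).ne').intervalIntegrable

lemma tendsto_integral_mul_atTop {φ : ℝ → ℝ} (hφ : ContinuousOn φ (Ioi 0))
    (hgrowth : Tendsto (fun u => u * φ u) atTop atTop) {c : ℝ} (hc : 1 < c) :
    Tendsto (fun y => ∫ u in y..c * y, φ u) atTop atTop := by
  have hlog : 0 < Real.log c := Real.log_pos hc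
  rw [tendsto_atTop]
  intro B
  obtain ⟨y₀, hy₀⟩ := eventually_atTop.1 (hgrowth.eventually_ge_atTop (B / Real.log c))
  filter_upwards [eventually_ge_atTop y₀, eventually_gt_atTop 0] with y hy₀y hy
  have hyc : y ≤ c * y := le_mul_of_one_le_left hy.le hc.le
  calc B = B / Real.log c * Real.log c := (div_mul_cancel₀ _ hlog.ne').symm
    _ ≤ ∫ u in y..c * y, φ u := by
        refine mul_log_le_integral hy hc.le ?_ fun u hu => ?_
        · refine (hφ.mono fun u hu => ?_).intervalIntegrable
          exact hy.trans_le (by simpa [hyc] using hu.1)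
        · have hu0 : 0 < u := hy.trans_le hu.1
          rw [div_le_iff₀ hu0, mul_comm]
          exact hy₀ u (hy₀y.trans hu.1)

theorem bdd_W_diff_implies_ratio_tendsto_one_general
(w ℓ W : ℝ → ℝ)
    (hw_cont : ContinuousOn w (Set.Ici 0))
    (hw_pos : ∀ x, 0 ≤ x → 0 < w x)
    (hwl : ∀ x, 0 < x → w x = x / ℓ x)
    (hl_inf : Tendsto ℓ atTop atTop)
    (hW : ∀ x, W x = ∫ u in (0:ℝ)..x, 1 / w u)
    (f g : ℝ → ℝ)
    (hf_inf : Tendsto f atTop atTop) (hg_inf : Tendsto g atTop atTop)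
    (hbdd : ∃ C : ℝ, ∀ x, 0 ≤ x → |W (f x) - W (g x)| ≤ C) :
    Tendsto (fun x => f x / g x) atTop (nhds 1) := by
  obtain ⟨C, hC⟩ := hbdd
  obtain rfl : W = fun x => ∫ u in (0 : ℝ)..x, 1 / w u := funext hW
  have hφ : ContinuousOn (fun u => 1 / w u) (Ici 0) :=
    continuousOn_const.div hw_cont fun x hx => (hw_pos x hx).ne'
  have hgrowth : Tendsto (fun u => u * (1 / w u)) atTop atTop :=
    hl_inf.congr' <| (eventually_gt_atTop 0).mono fun u hu => by
      show ℓ u = u * (1 / w u)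
      rw [hwl u hu]
      field_simp
  have hint : ∀ a b : ℝ, 0 ≤ a → 0 ≤ b → IntervalIntegrable (fun u => 1 / w u) volume a b :=
    fun a b ha hb => (hφ.mono fun u hu => le_trans (le_min ha hb) hu.1).intervalIntegrable
  refine tendsto_div_of_abs_sub_le
    (monotoneOn_integral_of_nonneg hφ fun u hu => (one_div_pos.2 (hw_pos u hu)).le)
    (fun c hc => ?_) hf_inf hg_inf (eventually_atTop.2 ⟨0, hC⟩)
  refine (tendsto_integral_mul_atTop (hφ.mono Ioi_subset_Ici_self) hgrowth hc).congr' ?_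
  filter_upwards [eventually_ge_atTop 0] with y hy
  exact (intervalIntegral.integral_interval_sub_left (hint 0 _ le_rfl (by positivity))
    (hint 0 y le_rfl hy)).symm

/-- If `f, g` are positive, tend to `+∞`, and `|W(f(x)) − W(g(x))|` is bounded
on `[0,∞)`, then `f(x)/g(x) → 1` as `x → ∞`. -/
theorem bdd_W_diff_implies_ratio_tendsto_one
(w ℓ W : ℝ → ℝ)
    (hw_cont : ContinuousOn w (Set.Ici 0))
    (hw_pos : ∀ x, 0 ≤ x → 0 < w x)
    (hw_mono : MonotoneOn w (Set.Ici 0))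
    (hwl : ∀ x, 0 < x → w x = x / ℓ x)
    (hl_slow : ∀ c, 0 < c → Tendsto (fun x => ℓ (c * x) / ℓ x) atTop (nhds 1))
    (hl_inf : Tendsto ℓ atTop atTop)
    (hW : ∀ x, W x = ∫ u in (0:ℝ)..x, 1 / w u)
    (f g : ℝ → ℝ)
    (hf_pos : ∀ x, 0 ≤ x → 0 < f x) (hg_pos : ∀ x, 0 ≤ x → 0 < g x)
    (hf_inf : Tendsto f atTop atTop) (hg_inf : Tendsto g atTop atTop)
    (hbdd : ∃ C : ℝ, ∀ x, 0 ≤ x → |W (f x) - W (g x)| ≤ C) :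
    Tendsto (fun x => f x / g x) atTop (nhds 1) :=
  bdd_W_diff_implies_ratio_tendsto_one_general w ℓ W hw_cont hw_pos hwl hl_inf hW f g hf_inf hg_inf
    hbdd
end

section
/- For every λ > 0, the difference W(λx) − W(x) is asymptotically equivalent to (log λ)·ℓ(x) as x → ∞. -/
/-!
For `x > 0` the substitution `u = x t` gives
`(W (λ x) - W x) / ℓ x = ∫ t in 1..λ, ℓ (x t) / (t ℓ x)`, and the integrand tends to `1 / t`
pointwise by slow variation. No uniform convergence theorem is needed: since `ℓ u / u = 1 / w u`
is antitone, the integrand is bounded by its value `ℓ (m x) / (m ℓ x)` at `m = min 1 λ`, which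
is eventually at most `2 / m` by slow variation at the single point `m`, so dominated
convergence applies.
-/

open Filter MeasureTheory Set Topology

lemma antitoneOn_comp_mul_div {g : ℝ → ℝ} (hg_anti : AntitoneOn (fun u => g u / u) (Ioi 0))
    {x : ℝ} (hx : 0 < x) (hgx : 0 < g x) :
    AntitoneOn (fun t => g (x * t) / (t * g x)) (Ioi 0) := by
  intro s hs t ht hst
  have key : g (x * t) / (x * t) ≤ g (x * s) / (x * s) :=
    hg_anti (mul_pos hx hs) (mul_pos hx ht) (by gcongr)
  calc g (x * t) / (t * g x) = g (x * t) / (x * t) * (x / g x) := by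
        field_simp
    _ ≤ g (x * s) / (x * s) * (x / g x) := by gcongr
    _ = g (x * s) / (s * g x) := by field_simp

theorem tendsto_integral_comp_mul_div_of_slowlyVarying {g : ℝ → ℝ}
    (hg_pos : ∀ x, 0 < x → 0 < g x) (hg_anti : AntitoneOn (fun u => g u / u) (Ioi 0))
    (hg_slow : ∀ c, 0 < c → Tendsto (fun x => g (c * x) / g x) atTop (𝓝 1))
    {a b : ℝ} (ha : 0 < a) (hb : 0 < b) :
    Tendsto (fun x => ∫ t in a..b, g (x * t) / (t * g x)) atTop (𝓝 (Real.log (b / a))) := by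
  set m := min a b
  have hm : 0 < m := lt_min ha hb
  have hm_le : ∀ t ∈ uIoc a b, m ≤ t := fun t ht => ht.1.le
  rw [← integral_inv_of_pos ha hb]
  refine intervalIntegral.tendsto_integral_filter_of_dominated_convergence (fun _ => 2 / m)
    ?_ ?_ intervalIntegrable_const ?_
  · filter_upwards [eventually_gt_atTop 0] with x hx
    have hsub : uIcc a b ⊆ Ioi 0 := fun t ht => hm.trans_le ht.1
    exact ((antitoneOn_comp_mul_div hg_anti hx (hg_pos x hx)).mono hsub).intervalIntegrable
      |>.def'.aestronglyMeasurable
  · filter_upwards [eventually_gt_atTop 0, (hg_slow m hm).eventually (gt_mem_nhds one_lt_two)]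
      with x hx hratio
    refine ae_of_all _ fun t ht => ?_
    have ht0 : 0 < t := hm.trans_le (hm_le t ht)
    have hgx := hg_pos x hx
    rw [Real.norm_of_nonneg (by have := hg_pos _ (mul_pos hx ht0); positivity)]
    calc g (x * t) / (t * g x) ≤ g (x * m) / (m * g x) :=
          antitoneOn_comp_mul_div hg_anti hx hgx hm ht0 (hm_le t ht)
      _ = g (m * x) / g x / m := by ring_nf
      _ ≤ 2 / m := div_le_div_of_nonneg_right hratio.le hm.le
  · refine ae_of_all _ fun t ht => ?_
    have h := (hg_slow t (hm.trans_le (hm_le t ht))).div_const t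
    rw [one_div] at h
    refine h.congr fun x => ?_
    rw [mul_comm x t, div_div, mul_comm (g x)]

lemma integral_sub_integral_of_antitoneOn {f : ℝ → ℝ} (hf : AntitoneOn f (Ici 0)) {x y : ℝ}
    (hx : 0 ≤ x) (hy : 0 ≤ y) :
    (∫ u in (0:ℝ)..y, f u) - ∫ u in (0:ℝ)..x, f u = ∫ u in x..y, f u := by
  have hint : ∀ z, 0 ≤ z → IntervalIntegrable f volume 0 z := fun z hz =>
    (hf.mono (by simp [uIcc_of_le hz, Icc_subset_Ici_self])).intervalIntegrable
  exact intervalIntegral.integral_interval_sub_left (hint y hy) (hint x hx)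

theorem W_lambda_diff_asymptotic_general
(w ℓ W : ℝ → ℝ)
    (hw_pos : ∀ x, 0 ≤ x → 0 < w x)
    (hw_mono : MonotoneOn w (Set.Ici 0))
    (hwl : ∀ x, 0 < x → w x = x / ℓ x)
    (hl_slow : ∀ c, 0 < c → Tendsto (fun x => ℓ (c * x) / ℓ x) atTop (nhds 1))
    (hW : ∀ x, W x = ∫ u in (0:ℝ)..x, 1 / w u)
    :
    ∀ lam : ℝ, 0 < lam →
      Tendsto (fun x => (W (lam * x) - W x) / ℓ x) atTop (nhds (Real.log lam)) := by
  intro lam hlam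
  have hw_anti : AntitoneOn (fun u => 1 / w u) (Ici 0) := fun a ha b hb hab =>
    one_div_le_one_div_of_le (hw_pos a ha) (hw_mono ha hb hab)
  have hℓ_div : EqOn (fun u => ℓ u / u) (fun u => 1 / w u) (Ioi 0) := fun u hu => by
    simp only [hwl u hu, one_div_div]
  have hℓ_pos : ∀ u, 0 < u → 0 < ℓ u := fun u hu =>
    (div_pos_iff_of_pos_left hu).1 (hwl u hu ▸ hw_pos u hu.le)
  have hℓ_anti : AntitoneOn (fun u => ℓ u / u) (Ioi 0) :=
    (hw_anti.mono Ioi_subset_Ici_self).congr hℓ_div.symm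
  have h := tendsto_integral_comp_mul_div_of_slowlyVarying hℓ_pos hℓ_anti hl_slow one_pos hlam
  rw [div_one] at h
  refine h.congr' ?_
  filter_upwards [eventually_gt_atTop 0] with x hx
  have hsub : uIcc x (x * lam) ⊆ Ioi 0 := fun u hu => (lt_min hx (mul_pos hx hlam)).trans_le hu.1
  calc ∫ t in (1:ℝ)..lam, ℓ (x * t) / (t * ℓ x)
      = (x * ∫ t in (1:ℝ)..lam, ℓ (x * t) / (x * t)) / ℓ x := by
        rw [← intervalIntegral.integral_const_mul, ← intervalIntegral.integral_div]
        refine intervalIntegral.integral_congr fun t _ => ?_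
        field_simp
    _ = (∫ u in x..x * lam, 1 / w u) / ℓ x := by
        rw [intervalIntegral.mul_integral_comp_mul_left (f := fun u => ℓ u / u), mul_one]
        exact congrArg (· / ℓ x) (intervalIntegral.integral_congr (hℓ_div.mono hsub))
    _ = (W (lam * x) - W x) / ℓ x := by
        rw [hW, hW, integral_sub_integral_of_antitoneOn hw_anti hx.le (by positivity), mul_comm]

/-- For every `λ > 0`, `W(λx) − W(x)` is asymptotically equivalent to `(log λ)·ℓ(x)`:
the ratio `(W(λx) − W(x))/ℓ(x)` tends to `log λ` as `x → ∞`. -/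
theorem W_lambda_diff_asymptotic
(w ℓ W : ℝ → ℝ)
    (hw_cont : ContinuousOn w (Set.Ici 0))
    (hw_pos : ∀ x, 0 ≤ x → 0 < w x)
    (hw_mono : MonotoneOn w (Set.Ici 0))
    (hwl : ∀ x, 0 < x → w x = x / ℓ x)
    (hl_slow : ∀ c, 0 < c → Tendsto (fun x => ℓ (c * x) / ℓ x) atTop (nhds 1))
    (hl_inf : Tendsto ℓ atTop atTop)
    (hW : ∀ x, W x = ∫ u in (0:ℝ)..x, 1 / w u)
    :
    ∀ lam : ℝ, 0 < lam →
      Tendsto (fun x => (W (lam * x) - W x) / ℓ x) atTop (nhds (Real.log lam)) :=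
  W_lambda_diff_asymptotic_general w ℓ W hw_pos hw_mono hwl hl_slow hW
end

section
/- The slowly varying factor ℓ is negligible compared to W: ℓ(x) = o(W(x)) as x → ∞. -/
open Filter MeasureTheory Finset Topology

/-!
Since `w` is non-decreasing, `W x - W (x / 2) ≥ (x / 2) / w x = ℓ x / 2`, and iterating along the
dyadic points `x / 2 ^ k` gives `∑ k < n, ℓ (x / 2 ^ k) ≤ 2 W x` for every `n`. Slow variation
makes each `ℓ (x / 2 ^ k) / ℓ x` tend to `1`, so `W x / ℓ x` is eventually at least about `n / 2`
for every `n`, i.e. it tends to infinity.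
-/

def SlowlyVarying (ℓ : ℝ → ℝ) : Prop :=
  ∀ c, 0 < c → Tendsto (fun x => ℓ (c * x) / ℓ x) atTop (𝓝 1)

theorem AntitoneOn.sub_mul_le_intervalIntegral {g : ℝ → ℝ} {a b : ℝ}
    (hg : AntitoneOn g (Set.Icc a b)) (hab : a ≤ b) :
    (b - a) * g b ≤ ∫ u in a..b, g u := by
  have hb : b ∈ Set.Icc a b := ⟨hab, le_rfl⟩
  calc (b - a) * g b = ∫ _ in a..b, g b := by simp
    _ ≤ ∫ u in a..b, g u :=
      intervalIntegral.integral_mono_on hab intervalIntegrable_const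
        ((Set.uIcc_of_le hab ▸ hg).intervalIntegrable) fun u hu => hg hu hb hu.2

theorem AntitoneOn.sum_dyadic_le_intervalIntegral {g : ℝ → ℝ} (hg : AntitoneOn g (Set.Ici 0))
    (hg_nonneg : ∀ u, 0 ≤ u → 0 ≤ g u) (n : ℕ) {x : ℝ} (hx : 0 ≤ x) :
    ∑ k ∈ range n, x / 2 ^ (k + 1) * g (x / 2 ^ k) ≤ ∫ u in (0 : ℝ)..x, g u := by
  induction n generalizing x with
  | zero => simpa using intervalIntegral.integral_nonneg hx fun u hu => hg_nonneg u hu.1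
  | succ n ih =>
    have hx2 : 0 ≤ x / 2 := by positivity
    have hint : ∀ a b : ℝ, 0 ≤ a → a ≤ b → IntervalIntegrable g volume a b := fun a b ha hab =>
      (hg.mono fun u hu => ha.trans (Set.uIcc_of_le hab ▸ hu).1).intervalIntegrable
    have hshift : ∑ k ∈ range n, x / 2 ^ (k + 1 + 1) * g (x / 2 ^ (k + 1)) =
        ∑ k ∈ range n, x / 2 / 2 ^ (k + 1) * g (x / 2 / 2 ^ k) := by
      simp only [div_div, ← pow_succ']
    have hhalf : x / 2 ^ (0 + 1) * g (x / 2 ^ 0) ≤ ∫ u in x / 2..x, g u := by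
      have := (hg.mono fun u hu => hx2.trans hu.1).sub_mul_le_intervalIntegral
        (half_le_self hx)
      convert this using 2
      · ring
      · simp
    rw [sum_range_succ', hshift,
      ← intervalIntegral.integral_add_adjacent_intervals (hint 0 (x / 2) le_rfl hx2)
        (hint (x / 2) x hx2 (by linarith))]
    exact add_le_add (ih hx2) hhalf

namespace SlowlyVarying

variable {ℓ : ℝ → ℝ}

theorem tendsto_sum_dyadic_div (hℓ : SlowlyVarying ℓ) (n : ℕ) :
    Tendsto (fun x => ∑ k ∈ range n, ℓ (x / 2 ^ k) / ℓ x) atTop (𝓝 n) := by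
  have hterm : ∀ k : ℕ, Tendsto (fun x => ℓ (x / 2 ^ k) / ℓ x) atTop (𝓝 1) := fun k => by
    simpa only [div_eq_inv_mul] using hℓ (2 ^ k)⁻¹ (by positivity)
  simpa using tendsto_finsetSum (range n) fun k _ => hterm k

theorem tendsto_div_atTop_of_sum_dyadic_le (hℓ : SlowlyVarying ℓ) {F : ℝ → ℝ}
    (hℓ_pos : ∀ᶠ x in atTop, 0 < ℓ x)
    (hF : ∀ n : ℕ, ∀ᶠ x in atTop, ∑ k ∈ range n, ℓ (x / 2 ^ k) ≤ F x) :
    Tendsto (fun x => F x / ℓ x) atTop atTop := by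
  refine tendsto_atTop.2 fun b => ?_
  obtain ⟨n, hn⟩ := exists_nat_gt b
  filter_upwards [(hℓ.tendsto_sum_dyadic_div n).eventually (eventually_gt_nhds hn), hℓ_pos, hF n]
    with x hsum hx hFx
  rw [← sum_div] at hsum
  exact hsum.le.trans (div_le_div_of_nonneg_right hFx hx.le)

end SlowlyVarying

theorem ell_littleO_W_general
(w ℓ W : ℝ → ℝ)
    (hw_pos : ∀ x, 0 ≤ x → 0 < w x)
    (hw_mono : MonotoneOn w (Set.Ici 0))
    (hwl : ∀ x, 0 < x → w x = x / ℓ x)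
    (hl_slow : ∀ c, 0 < c → Tendsto (fun x => ℓ (c * x) / ℓ x) atTop (nhds 1))
    (hW : ∀ x, W x = ∫ u in (0:ℝ)..x, 1 / w u)
    :
    Tendsto (fun x => ℓ x / W x) atTop (nhds 0) := by
  have hℓ_pos : ∀ x, 0 < x → 0 < ℓ x := fun x hx =>
    (div_pos_iff_of_pos_left hx).1 (hwl x hx ▸ hw_pos x hx.le)
  have hg : AntitoneOn (fun u => 1 / w u) (Set.Ici 0) := fun a ha b hb hab =>
    one_div_le_one_div_of_le (hw_pos a ha) (hw_mono ha hb hab)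
  have hsum : ∀ n : ℕ, ∀ᶠ x in atTop, ∑ k ∈ range n, ℓ (x / 2 ^ k) ≤ 2 * W x := fun n => by
    filter_upwards [eventually_gt_atTop 0] with x hx
    have hdyadic := hg.sum_dyadic_le_intervalIntegral
      (fun u hu => (one_div_pos.2 (hw_pos u hu)).le) n hx.le
    have hterm : ∀ k : ℕ, x / 2 ^ (k + 1) * (1 / w (x / 2 ^ k)) = ℓ (x / 2 ^ k) / 2 := fun k => by
      rw [hwl _ (by positivity), pow_succ]
      field_simp
    simp only [hterm, ← sum_div, ← hW] at hdyadic
    linarith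
  have hWℓ := SlowlyVarying.tendsto_div_atTop_of_sum_dyadic_le hl_slow
    ((eventually_gt_atTop 0).mono hℓ_pos) hsum
  have hinv := hWℓ.inv_tendsto_atTop.const_mul 2
  rw [mul_zero] at hinv
  refine hinv.congr fun x => ?_
  simp only [Pi.inv_apply, inv_div]
  ring

/-- The slowly varying factor `ℓ` is negligible compared to `W`:
`ℓ(x) = o(W(x))` as `x → ∞`. -/
theorem ell_littleO_W
(w ℓ W : ℝ → ℝ)
    (hw_cont : ContinuousOn w (Set.Ici 0))
    (hw_pos : ∀ x, 0 ≤ x → 0 < w x)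
    (hw_mono : MonotoneOn w (Set.Ici 0))
    (hwl : ∀ x, 0 < x → w x = x / ℓ x)
    (hl_slow : ∀ c, 0 < c → Tendsto (fun x => ℓ (c * x) / ℓ x) atTop (nhds 1))
    (hl_inf : Tendsto ℓ atTop atTop)
    (hW : ∀ x, W x = ∫ u in (0:ℝ)..x, 1 / w u)
    :
    Tendsto (fun x => ℓ x / W x) atTop (nhds 0) :=
  ell_littleO_W_general w ℓ W hw_pos hw_mono hwl hl_slow hW
end

section
/- For each η ∈ (0,1), the function Φ_{η,2}(x) := W^{-1}(η·W(x/η)) satisfies W(x) − W_{Φ_{η,2}}(x) = o(ℓ(x)) as x → ∞, where W_ψ(x) := ∫₀ˣ du/w(u + ψ(u)). -/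
open Filter MeasureTheory Set Real Asymptotics Topology

/-!
Put `f = 1 / w`, so that `f u = ℓ u / u`, `W' = f`, and the numerator is
`∫₀ˣ (f u - f (u + Φ u)) du`. Bounding `ℓ` on `[a, b]` by its endpoint values gives
`ℓ a · log (b / a) ≤ W b - W a ≤ ℓ b · log (b / a)`. With slow variation this yields `W / ℓ → ∞`
and `W (u / η) / W u → 1`, hence `W (Φ u) = η W (u / η) ≤ (1 + η) / 2 · W u`, and the upper bound
on `[Φ u, u]` turns this into `Φ u / u ≤ exp (-c W u / ℓ u)` with `c = (1 - η) / 2`. Since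
`f u - f (u + Φ u) ≤ (Φ u / u) f u`, the integrand is at most `exp (-c W u / ℓ u) W' u`. For
`u ≤ x` half of this exponent is eventually below any `ε` because `W / ℓ → ∞`, while the other
half is at most `exp (-(c / 2) W u / ℓ x)` by monotonicity of `ℓ`, whose integral against `W'` is
at most `2 ℓ x / c`.
-/

lemma intervalIntegrable_of_antitoneOn_Ici {f : ℝ → ℝ} {c a b : ℝ} (hf : AntitoneOn f (Ici c))
    (ha : c ≤ a) (hb : c ≤ b) : IntervalIntegrable f volume a b :=
  (hf.mono fun _ ht => (le_inf ha hb).trans ht.1).intervalIntegrable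

lemma intervalIntegrable_mul_inv_of_monotoneOn {ℓ : ℝ → ℝ} {a b : ℝ}
    (hℓ : MonotoneOn ℓ (Icc a b)) (ha : 0 < a) (hab : a ≤ b) :
    IntervalIntegrable (fun u => ℓ u * u⁻¹) volume a b := by
  rw [← uIcc_of_le hab] at hℓ
  exact hℓ.intervalIntegrable.mul_continuousOn (continuousOn_inv₀.mono fun u hu =>
    ne_of_mem_of_not_mem hu (notMem_uIcc_of_lt ha (ha.trans_le hab)))

lemma MonotoneOn.mul_log_le_integral_div {ℓ : ℝ → ℝ} {a b : ℝ} (hℓ : MonotoneOn ℓ (Icc a b))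
    (ha : 0 < a) (hab : a ≤ b) : ℓ a * log (b / a) ≤ ∫ u in a..b, ℓ u / u := by
  rw [← integral_inv_of_pos ha (ha.trans_le hab), ← intervalIntegral.integral_const_mul]
  simp only [div_eq_mul_inv]
  refine intervalIntegral.integral_mono_on hab
    (intervalIntegrable_mul_inv_of_monotoneOn monotoneOn_const ha hab)
    (intervalIntegrable_mul_inv_of_monotoneOn hℓ ha hab) fun u hu => ?_
  exact mul_le_mul_of_nonneg_right (hℓ (left_mem_Icc.2 hab) hu hu.1)
    (inv_nonneg.2 (ha.le.trans hu.1))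

lemma MonotoneOn.integral_div_le_mul_log {ℓ : ℝ → ℝ} {a b : ℝ} (hℓ : MonotoneOn ℓ (Icc a b))
    (ha : 0 < a) (hab : a ≤ b) : ∫ u in a..b, ℓ u / u ≤ ℓ b * log (b / a) := by
  rw [← integral_inv_of_pos ha (ha.trans_le hab), ← intervalIntegral.integral_const_mul]
  simp only [div_eq_mul_inv]
  refine intervalIntegral.integral_mono_on hab
    (intervalIntegrable_mul_inv_of_monotoneOn hℓ ha hab)
    (intervalIntegrable_mul_inv_of_monotoneOn monotoneOn_const ha hab) fun u hu => ?_
  exact mul_le_mul_of_nonneg_right (hℓ hu (right_mem_Icc.2 hab) hu.2)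
    (inv_nonneg.2 (ha.le.trans hu.1))

lemma integral_le_div_of_le_exp_neg_mul_deriv {W f d : ℝ → ℝ} {a b c K : ℝ} (hab : a ≤ b)
    (hc : 0 < c) (hK : 0 ≤ K) (hW : ∀ u ∈ Icc a b, HasDerivAt W (f u) u)
    (hf : ContinuousOn f (Icc a b)) (hWa : 0 ≤ W a) (hd_int : IntervalIntegrable d volume a b)
    (hd : ∀ u ∈ Icc a b, d u ≤ K * (exp (-(c * W u)) * f u)) :
    ∫ u in a..b, d u ≤ K / c := by
  have hderiv : ∀ u ∈ uIcc a b,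
      HasDerivAt (fun t => -exp (-(c * W t)) / c) (exp (-(c * W u)) * f u) u := by
    intro u hu
    have h := (((hW u (uIcc_of_le hab ▸ hu)).const_mul c).fun_neg.exp.fun_neg.div_const c)
    exact h.congr_deriv (by field_simp)
  have hcont : ContinuousOn (fun u => exp (-(c * W u)) * f u) (uIcc a b) := by
    rw [uIcc_of_le hab]
    exact ((continuousOn_of_forall_continuousAt fun u hu => (hW u hu).continuousAt).const_smul c
      |>.neg.rexp).mul hf
  have hmajorant : ∫ u in a..b, exp (-(c * W u)) * f u ≤ 1 / c := by
    rw [intervalIntegral.integral_eq_sub_of_hasDerivAt hderiv hcont.intervalIntegrable,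
      div_sub_div_same, div_le_div_iff_of_pos_right hc]
    have : exp (-(c * W a)) ≤ 1 := exp_le_one_iff.2 (by nlinarith)
    linarith [exp_pos (-(c * W b))]
  calc ∫ u in a..b, d u ≤ ∫ u in a..b, K * (exp (-(c * W u)) * f u) :=
        intervalIntegral.integral_mono_on hab hd_int (hcont.intervalIntegrable.const_mul K) hd
    _ = K * ∫ u in a..b, exp (-(c * W u)) * f u := intervalIntegral.integral_const_mul _ _
    _ ≤ K * (1 / c) := mul_le_mul_of_nonneg_left hmajorant hK
    _ = K / c := mul_one_div K c

section Asymptotics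

variable {W ℓ : ℝ → ℝ} {x₀ : ℝ}

lemma tendsto_div_atTop_of_mul_log_le
    (hlow : ∀ a b, x₀ ≤ a → 0 < a → a ≤ b → ℓ a * log (b / a) ≤ W b - W a)
    (hℓ_slow : ∀ c, 0 < c → Tendsto (fun x => ℓ (c * x) / ℓ x) atTop (𝓝 1))
    (hℓ : ∀ᶠ x in atTop, 0 < ℓ x) (hW : ∀ᶠ x in atTop, 0 ≤ W x) :
    Tendsto (fun x => W x / ℓ x) atTop atTop := by
  refine tendsto_atTop.2 fun M => ?_
  -- compare `W` on `[c x, x]`, where `log (1 / c) = 2 |M|`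
  set c := exp (-(2 * |M|))
  have hc : 0 < c := exp_pos _
  have hc1 : c ≤ 1 := exp_le_one_iff.2 (by linarith [abs_nonneg M])
  have hcx : Tendsto (fun x => c * x) atTop atTop := tendsto_id.const_mul_atTop hc
  filter_upwards [hℓ, hcx.eventually hW, hcx.eventually (eventually_ge_atTop x₀),
    hcx.eventually (eventually_gt_atTop 0),
    (hℓ_slow c hc).eventually (eventually_ge_nhds (by norm_num : (1 / 2 : ℝ) < 1))]
    with x hℓx hWcx hx₀ hcx0 hratio
  have hx : 0 < x := pos_of_mul_pos_right hcx0 hc.le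
  have hlog : log (x / (c * x)) = 2 * |M| := by
    rw [div_mul_cancel_right₀ hx.ne', log_inv, log_exp, neg_neg]
  have hgrowth := hlow (c * x) x hx₀ hcx0 (mul_le_of_le_one_left hx.le hc1)
  rw [hlog] at hgrowth
  rw [le_div_iff₀ hℓx] at hratio ⊢
  nlinarith [le_abs_self M, abs_nonneg M]

lemma tendsto_comp_mul_div_self {c : ℝ} (hc : 1 ≤ c)
    (hlow : ∀ a b, x₀ ≤ a → 0 < a → a ≤ b → ℓ a * log (b / a) ≤ W b - W a)
    (hup : ∀ a b, x₀ ≤ a → 0 < a → a ≤ b → W b - W a ≤ ℓ b * log (b / a))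
    (hℓ_slow : Tendsto (fun x => ℓ (c * x) / ℓ x) atTop (𝓝 1))
    (hℓ : ∀ᶠ x in atTop, 0 < ℓ x) (hWℓ : Tendsto (fun x => W x / ℓ x) atTop atTop) :
    Tendsto (fun x => W (c * x) / W x) atTop (𝓝 1) := by
  have hbound : Tendsto (fun x => ℓ (c * x) / ℓ x * log c * (W x / ℓ x)⁻¹) atTop (𝓝 0) := by
    simpa using (hℓ_slow.mul_const (log c)).mul hWℓ.inv_tendsto_atTop
  have hlogc : 0 ≤ log c := log_nonneg hc
  have hrel : ∀ᶠ x in atTop, 0 < W x ∧ 0 ≤ (W (c * x) - W x) / W x ∧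
      (W (c * x) - W x) / W x ≤ ℓ (c * x) / ℓ x * log c * (W x / ℓ x)⁻¹ := by
    filter_upwards [hℓ, hWℓ.eventually_gt_atTop 0, eventually_ge_atTop x₀, eventually_gt_atTop 0]
      with x hℓx hWℓx hx₀ hx
    have hWx : 0 < W x := by simpa [hℓx] using hWℓx
    have hcx : x ≤ c * x := le_mul_of_one_le_left hx.le hc
    have hlog : log (c * x / x) = log c := by rw [mul_div_cancel_right₀ _ hx.ne']
    have hl := hlow x (c * x) hx₀ hx hcx
    have hu := hup x (c * x) hx₀ hx hcx
    rw [hlog] at hl hu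
    refine ⟨hWx, div_nonneg (by nlinarith) hWx.le, ?_⟩
    rw [inv_div, div_le_iff₀ hWx]
    calc W (c * x) - W x ≤ ℓ (c * x) * log c := hu
      _ = ℓ (c * x) / ℓ x * log c * (ℓ x / W x) * W x := by field_simp
  have hsub : Tendsto (fun x => (W (c * x) - W x) / W x) atTop (𝓝 0) :=
    tendsto_of_tendsto_of_tendsto_of_le_of_le' tendsto_const_nhds hbound
      (hrel.mono fun _ h => h.2.1) (hrel.mono fun _ h => h.2.2)
  refine (by simpa using hsub.const_add 1 : Tendsto (fun x => 1 + (W (c * x) - W x) / W x) atTop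
    (𝓝 1)).congr' (hrel.mono fun x h => ?_)
  field_simp [h.1.ne']
  ring

lemma eventually_div_le_exp_of_le_mul {ψ : ℝ → ℝ} {θ : ℝ} (hθ : θ ≤ 1)
    (hup : ∀ a b, x₀ ≤ a → 0 < a → a ≤ b → W b - W a ≤ ℓ b * log (b / a))
    (hW : StrictMonoOn W (Ici 0)) (hψ : Tendsto ψ atTop atTop)
    (hψW : ∀ᶠ u in atTop, W (ψ u) ≤ θ * W u) (hℓ : ∀ᶠ x in atTop, 0 < ℓ x)
    (hWℓ : Tendsto (fun x => W x / ℓ x) atTop atTop) :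
    ∀ᶠ u in atTop, ψ u / u ≤ exp (-((1 - θ) * (W u / ℓ u))) := by
  filter_upwards [hψW, hψ.eventually_ge_atTop x₀, hψ.eventually_gt_atTop 0, hℓ,
    hWℓ.eventually_ge_atTop 0, eventually_ge_atTop 0] with u hψWu hψx₀ hψ0 hℓu hWℓu hu
  have hWu : 0 ≤ W u := by rwa [le_div_iff₀ hℓu, zero_mul] at hWℓu
  have hψu : ψ u ≤ u := (hW.le_iff_le hψ0.le hu).1 (by nlinarith)
  have hgap : (1 - θ) * (W u / ℓ u) ≤ log (u / ψ u) := by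
    rw [mul_div_assoc', div_le_iff₀ hℓu, mul_comm (log _)]
    linarith [hup (ψ u) u hψx₀ hψ0 hψu]
  rw [le_log_iff_exp_le (div_pos (hψ0.trans_le hψu) hψ0)] at hgap
  rw [exp_neg, div_le_iff₀ (hψ0.trans_le hψu), ← div_eq_inv_mul, le_div_iff₀ (exp_pos _)]
  rwa [le_div_iff₀ hψ0, mul_comm] at hgap

end Asymptotics

section Primitive

variable {f W ℓ : ℝ → ℝ}

lemma primitive_sub_eq_integral (hf : AntitoneOn f (Ici 0)) (hW : ∀ x, W x = ∫ u in (0:ℝ)..x, f u)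
    {a b : ℝ} (ha : 0 ≤ a) (hb : 0 ≤ b) : W b - W a = ∫ u in a..b, f u := by
  rw [hW, hW, intervalIntegral.integral_interval_sub_left
    (intervalIntegrable_of_antitoneOn_Ici hf le_rfl hb)
    (intervalIntegrable_of_antitoneOn_Ici hf le_rfl ha)]

lemma strictMonoOn_primitive (hf : AntitoneOn f (Ici 0)) (hf_pos : ∀ x, 0 ≤ x → 0 < f x)
    (hW : ∀ x, W x = ∫ u in (0:ℝ)..x, f u) : StrictMonoOn W (Ici 0) := by
  intro a ha b hb hab
  rw [← sub_pos, primitive_sub_eq_integral hf hW ha hb]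
  exact intervalIntegral.intervalIntegral_pos_of_pos_on
    (intervalIntegrable_of_antitoneOn_Ici hf ha hb) (fun u hu => hf_pos u (le_trans ha hu.1.le)) hab

lemma continuousOn_primitive_Ici (hf : AntitoneOn f (Ici 0))
    (hW : ∀ x, W x = ∫ u in (0:ℝ)..x, f u) : ContinuousOn W (Ici 0) := by
  intro x hx
  have hnhds : Icc 0 (x + 1) ∈ 𝓝[Ici 0] x := by
    rw [← Ici_inter_Iic]
    exact inter_mem_nhdsWithin _ (Iic_mem_nhds (lt_add_one x))
  rw [funext hW]
  refine (intervalIntegral.continuousWithinAt_primitive (measure_singleton x) ?_)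
    |>.mono_of_mem_nhdsWithin hnhds
  exact intervalIntegrable_of_antitoneOn_Ici hf (le_min le_rfl le_rfl)
    (le_max_of_le_right (by linarith [mem_Ici.1 hx]))

lemma hasDerivAt_primitive (hf : AntitoneOn f (Ici 0)) (hf_cont : ContinuousOn f (Ioi 0))
    (hW : ∀ x, W x = ∫ u in (0:ℝ)..x, f u) {x : ℝ} (hx : 0 < x) : HasDerivAt W (f x) x := by
  rw [funext hW]
  exact intervalIntegral.integral_hasDerivAt_right
    (intervalIntegrable_of_antitoneOn_Ici hf le_rfl hx.le)
    (hf_cont.stronglyMeasurableAtFilter isOpen_Ioi x hx) (hf_cont.continuousAt (Ioi_mem_nhds hx))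

lemma primitive_sub_eq_integral_div (hf : AntitoneOn f (Ici 0))
    (hW : ∀ x, W x = ∫ u in (0:ℝ)..x, f u) (hfℓ : ∀ u, 0 < u → f u = ℓ u / u) {a b : ℝ}
    (ha : 0 < a) (hab : a ≤ b) : W b - W a = ∫ u in a..b, ℓ u / u := by
  rw [primitive_sub_eq_integral hf hW ha.le (ha.le.trans hab)]
  exact intervalIntegral.integral_congr fun u hu => hfℓ u (ha.trans_le (uIcc_of_le hab ▸ hu).1)

lemma mul_log_le_primitive_sub (hf : AntitoneOn f (Ici 0))
    (hW : ∀ x, W x = ∫ u in (0:ℝ)..x, f u) (hfℓ : ∀ u, 0 < u → f u = ℓ u / u) {x₀ : ℝ}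
    (hℓ : MonotoneOn ℓ (Ici x₀)) {a b : ℝ} (hx₀ : x₀ ≤ a) (ha : 0 < a) (hab : a ≤ b) :
    ℓ a * log (b / a) ≤ W b - W a := by
  rw [primitive_sub_eq_integral_div hf hW hfℓ ha hab]
  exact (hℓ.mono fun u hu => hx₀.trans hu.1).mul_log_le_integral_div ha hab

lemma primitive_sub_le_mul_log (hf : AntitoneOn f (Ici 0))
    (hW : ∀ x, W x = ∫ u in (0:ℝ)..x, f u) (hfℓ : ∀ u, 0 < u → f u = ℓ u / u) {x₀ : ℝ}
    (hℓ : MonotoneOn ℓ (Ici x₀)) {a b : ℝ} (hx₀ : x₀ ≤ a) (ha : 0 < a) (hab : a ≤ b) :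
    W b - W a ≤ ℓ b * log (b / a) := by
  rw [primitive_sub_eq_integral_div hf hW hfℓ ha hab]
  exact (hℓ.mono fun u hu => hx₀.trans hu.1).integral_div_le_mul_log ha hab

lemma primitive_nonneg (hf_pos : ∀ x, 0 ≤ x → 0 < f x) (hW : ∀ x, W x = ∫ u in (0:ℝ)..x, f u)
    {x : ℝ} (hx : 0 ≤ x) : 0 ≤ W x := by
  rw [hW]
  exact intervalIntegral.integral_nonneg hx fun u hu => (hf_pos u hu.1).le

lemma tendsto_primitive_div_atTop (hf : AntitoneOn f (Ici 0)) (hf_pos : ∀ x, 0 ≤ x → 0 < f x)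
    (hW : ∀ x, W x = ∫ u in (0:ℝ)..x, f u) (hfℓ : ∀ u, 0 < u → f u = ℓ u / u) {x₀ : ℝ}
    (hℓ_mono : MonotoneOn ℓ (Ici x₀))
    (hℓ_slow : ∀ c, 0 < c → Tendsto (fun x => ℓ (c * x) / ℓ x) atTop (𝓝 1))
    (hℓ : Tendsto ℓ atTop atTop) : Tendsto (fun x => W x / ℓ x) atTop atTop :=
  tendsto_div_atTop_of_mul_log_le (fun _ _ => mul_log_le_primitive_sub hf hW hfℓ hℓ_mono)
    hℓ_slow (hℓ.eventually_gt_atTop 0) ((eventually_ge_atTop 0).mono fun _ =>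
      primitive_nonneg hf_pos hW)

lemma surjOn_primitive (hf : AntitoneOn f (Ici 0)) (hW : ∀ x, W x = ∫ u in (0:ℝ)..x, f u)
    (htop : Tendsto W atTop atTop) : SurjOn W (Ici 0) (Ici 0) := fun _ hy =>
  intermediate_value_Ici (continuousOn_primitive_Ici hf hW) htop
    (by rwa [hW, intervalIntegral.integral_same])

end Primitive

lemma div_sub_div_add_le {a b u p : ℝ} (hu : 0 < u) (hp : 0 ≤ p) (ha : 0 ≤ a) (hab : a ≤ b) :
    a / u - b / (u + p) ≤ p / u * (a / u) := by
  have hup : 0 < u + p := by positivity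
  calc a / u - b / (u + p) ≤ a / u - a / (u + p) := by gcongr
    _ = p / (u + p) * (a / u) := by field_simp; ring
    _ ≤ p / u * (a / u) := by gcongr; linarith

lemma eventually_sub_comp_add_le {f ℓ ψ g : ℝ → ℝ} {x₀ : ℝ} (hf : AntitoneOn f (Ici 0))
    (hfℓ : ∀ u, 0 < u → f u = ℓ u / u) (hℓ_mono : MonotoneOn ℓ (Ici x₀))
    (hℓ : ∀ᶠ x in atTop, 0 < ℓ x) (hψ0 : ∀ u, 0 ≤ u → 0 ≤ ψ u)
    (hψ : ∀ᶠ u in atTop, ψ u / u ≤ g u) :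
    ∀ᶠ u in atTop, 0 ≤ f u - f (u + ψ u) ∧ f u - f (u + ψ u) ≤ g u * f u := by
  filter_upwards [hψ, hℓ, eventually_gt_atTop 0, eventually_ge_atTop x₀] with u hψu hℓu hu hx₀
  have hsum : 0 < u + ψ u := add_pos_of_pos_of_nonneg hu (hψ0 u hu.le)
  have hle : u ≤ u + ψ u := le_add_of_nonneg_right (hψ0 u hu.le)
  refine ⟨sub_nonneg.2 (hf hu.le hsum.le hle), ?_⟩
  rw [hfℓ u hu, hfℓ _ hsum]
  calc _ ≤ ψ u / u * (ℓ u / u) :=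
        div_sub_div_add_le hu (hψ0 u hu.le) hℓu.le (hℓ_mono hx₀ (hx₀.trans hle) hle)
    _ ≤ _ := by gcongr

section Inverse

variable {W Winv : ℝ → ℝ}

lemma StrictMonoOn.monotoneOn_of_rightInvOn {α β : Type*} [LinearOrder α] [Preorder β]
    {g : α → β} {g' : β → α} {s : Set α} {t : Set β} (hg : StrictMonoOn g s)
    (hinv : RightInvOn g' g t) (hmaps : MapsTo g' t s) : MonotoneOn g' t :=
  fun _ hy _ hz hyz => (hg.le_iff_le (hmaps hy) (hmaps hz)).1 (by rwa [hinv hy, hinv hz])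

lemma tendsto_atTop_of_rightInvOn (hW : StrictMonoOn W (Ici 0))
    (hinv : RightInvOn Winv W (Ici 0)) (hmaps : MapsTo Winv (Ici 0) (Ici 0)) :
    Tendsto Winv atTop atTop := by
  refine tendsto_atTop.2 fun M => ?_
  filter_upwards [eventually_ge_atTop (max (W (max M 0)) 0)] with y hy
  have hy0 : y ∈ Ici 0 := le_of_max_le_right hy
  refine (le_max_left M 0).trans ((hW.le_iff_le (mem_Ici.2 (le_max_right M 0)) (hmaps hy0)).1 ?_)
  rw [hinv hy0]
  exact le_of_max_le_left hy

lemma eventually_rightInv_comp_le {ℓ : ℝ → ℝ} {x₀ η : ℝ} (hη : 0 < η) (hη1 : η < 1)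
    (hlow : ∀ a b, x₀ ≤ a → 0 < a → a ≤ b → ℓ a * log (b / a) ≤ W b - W a)
    (hup : ∀ a b, x₀ ≤ a → 0 < a → a ≤ b → W b - W a ≤ ℓ b * log (b / a))
    (hW_nonneg : ∀ x, 0 ≤ x → 0 ≤ W x) (hinv : RightInvOn Winv W (Ici 0))
    (hℓ_slow : Tendsto (fun x => ℓ (η⁻¹ * x) / ℓ x) atTop (𝓝 1))
    (hℓ : ∀ᶠ x in atTop, 0 < ℓ x) (hWℓ : Tendsto (fun x => W x / ℓ x) atTop atTop) :
    ∀ᶠ u in atTop, W (Winv (η * W (u / η))) ≤ (1 + η) / 2 * W u := by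
  have hratio := (tendsto_comp_mul_div_self (one_le_inv₀ hη |>.2 hη1.le) hlow hup hℓ_slow hℓ
    hWℓ).const_mul η
  rw [mul_one] at hratio
  filter_upwards [hratio.eventually (eventually_le_nhds (by linarith : η < (1 + η) / 2)), hℓ,
    hWℓ.eventually_gt_atTop 0, eventually_ge_atTop 0] with u hu hℓu hWℓu hu0
  have hWu : 0 < W u := by rwa [lt_div_iff₀ hℓu, zero_mul] at hWℓu
  rw [hinv (mul_nonneg hη.le (hW_nonneg _ (div_nonneg hu0 hη.le))), ← div_le_iff₀ hWu, mul_div_assoc,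
    ← inv_mul_eq_div η u]
  exact hu

lemma eventually_rightInv_comp_div_le_exp {ℓ : ℝ → ℝ} {x₀ η : ℝ} (hη : 0 < η) (hη1 : η < 1)
    (hlow : ∀ a b, x₀ ≤ a → 0 < a → a ≤ b → ℓ a * log (b / a) ≤ W b - W a)
    (hup : ∀ a b, x₀ ≤ a → 0 < a → a ≤ b → W b - W a ≤ ℓ b * log (b / a))
    (hW : StrictMonoOn W (Ici 0)) (hW_nonneg : ∀ x, 0 ≤ x → 0 ≤ W x)
    (hinv : RightInvOn Winv W (Ici 0)) (hmaps : MapsTo Winv (Ici 0) (Ici 0))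
    (hℓ_slow : Tendsto (fun x => ℓ (η⁻¹ * x) / ℓ x) atTop (𝓝 1)) (hℓ : ∀ᶠ x in atTop, 0 < ℓ x)
    (hWℓ : Tendsto (fun x => W x / ℓ x) atTop atTop) (hW_top : Tendsto W atTop atTop) :
    ∀ᶠ u in atTop, Winv (η * W (u / η)) / u ≤ exp (-((1 - η) / 2 * (W u / ℓ u))) := by
  have hΦ_top : Tendsto (fun u => Winv (η * W (u / η))) atTop atTop :=
    (tendsto_atTop_of_rightInvOn hW hinv hmaps).comp
      ((hW_top.comp (tendsto_id.atTop_div_const hη)).const_mul_atTop hη)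
  have h := eventually_div_le_exp_of_le_mul (by linarith : (1 + η) / 2 ≤ 1) hup hW hΦ_top
    (eventually_rightInv_comp_le hη hη1 hlow hup hW_nonneg hinv hℓ_slow hℓ hWℓ) hℓ hWℓ
  simpa only [show 1 - (1 + η) / 2 = (1 - η) / 2 by ring] using h

lemma monotoneOn_rightInv_comp {η : ℝ} (hη : 0 < η) (hW : StrictMonoOn W (Ici 0))
    (hW_nonneg : ∀ x, 0 ≤ x → 0 ≤ W x) (hinv : RightInvOn Winv W (Ici 0))
    (hmaps : MapsTo Winv (Ici 0) (Ici 0)) : MonotoneOn (fun u => Winv (η * W (u / η))) (Ici 0) := by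
  refine (hW.monotoneOn_of_rightInvOn hinv hmaps).comp (fun a ha b hb hab => ?_)
    fun u hu => mul_nonneg hη.le (hW_nonneg _ (div_nonneg hu hη.le))
  exact mul_le_mul_of_nonneg_left (hW.monotoneOn (div_nonneg ha hη.le) (div_nonneg hb hη.le)
    (div_le_div_of_nonneg_right hab hη.le)) hη.le

end Inverse

section Integral

variable {W ℓ f d : ℝ → ℝ}

lemma eventually_le_mul_exp_div_of_le_exp {c ε : ℝ} (hc : 0 < c) (hε : 0 < ε)
    (hWℓ : Tendsto (fun x => W x / ℓ x) atTop atTop) (hℓ : ∀ᶠ x in atTop, 0 < ℓ x)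
    (hd : ∀ᶠ u in atTop, 0 ≤ d u ∧ d u ≤ exp (-(c * (W u / ℓ u))) * f u) :
    ∀ᶠ u in atTop, ∀ L, ℓ u ≤ L → d u ≤ ε * (exp (-(c / 2 / L * W u)) * f u) := by
  have hsmall : ∀ᶠ u in atTop, exp (-(c / 2 * (W u / ℓ u))) ≤ ε :=
    (tendsto_exp_atBot.comp (tendsto_neg_atTop_atBot.comp (hWℓ.const_mul_atTop (half_pos hc))))
      |>.eventually (eventually_le_nhds hε)
  filter_upwards [hd, hℓ, hWℓ.eventually_ge_atTop 0, hsmall]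
    with u ⟨hd0, hdle⟩ hℓu hWℓu hsmallu L hL
  have hWu : 0 ≤ W u := by rwa [le_div_iff₀ hℓu, zero_mul] at hWℓu
  have hfu : 0 ≤ f u := (mul_nonneg_iff_of_pos_left (exp_pos _)).1 (hd0.trans hdle)
  have hL_exp : exp (-(c / 2 * (W u / ℓ u))) ≤ exp (-(c / 2 / L * W u)) := by
    rw [exp_le_exp, neg_le_neg_iff, div_mul_eq_mul_div, mul_div_assoc]
    exact mul_le_mul_of_nonneg_left (div_le_div_of_nonneg_left hWu hℓu hL) (half_pos hc).le
  calc d u ≤ exp (-(c * (W u / ℓ u))) * f u := hdle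
    _ = exp (-(c / 2 * (W u / ℓ u))) * exp (-(c / 2 * (W u / ℓ u))) * f u := by
        rw [← exp_add]; ring_nf
    _ ≤ ε * exp (-(c / 2 / L * W u)) * f u := by gcongr
    _ = ε * (exp (-(c / 2 / L * W u)) * f u) := mul_assoc _ _ _

lemma isLittleO_integral_of_le_exp {a x₀ c : ℝ} (hc : 0 < c)
    (hℓ : Tendsto ℓ atTop atTop) (hℓ_mono : MonotoneOn ℓ (Ici x₀))
    (hWℓ : Tendsto (fun x => W x / ℓ x) atTop atTop)
    (hW : ∀ᶠ u in atTop, HasDerivAt W (f u) u) (hf : ∀ᶠ u in atTop, ContinuousAt f u)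
    (hd_int : ∀ b, a ≤ b → IntervalIntegrable d volume a b)
    (hd : ∀ᶠ u in atTop, 0 ≤ d u ∧ d u ≤ exp (-(c * (W u / ℓ u))) * f u) :
    (fun x => ∫ u in a..x, d u) =o[atTop] ℓ := by
  refine IsLittleO.of_bound fun ε hε => ?_
  have hℓpos := hℓ.eventually_gt_atTop 0
  have hW0 : ∀ᶠ u in atTop, 0 ≤ W u := by
    filter_upwards [hℓpos, hWℓ.eventually_ge_atTop 0] with u hℓu hWℓu
    rwa [le_div_iff₀ hℓu, zero_mul] at hWℓu
  set δ := ε * c / 4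
  obtain ⟨A, hA⟩ := eventually_atTop.1 <|
    (eventually_le_mul_exp_div_of_le_exp hc (by positivity : 0 < δ) hWℓ hℓpos hd).and <|
    hd.and <| hW.and <| hf.and <| hW0.and <| eventually_ge_atTop (max a x₀)
  have haA : a ≤ A := le_of_max_le_left (hA A le_rfl).2.2.2.2.2
  have hx₀A : x₀ ≤ A := le_of_max_le_right (hA A le_rfl).2.2.2.2.2
  set K := ∫ u in a..A, d u
  filter_upwards [eventually_ge_atTop A, hℓ.eventually_ge_atTop (2 * |K| / ε), hℓpos]
    with x hxA hℓK hℓx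
  have htail_int : IntervalIntegrable d volume A x :=
    (hd_int A haA).symm.trans (hd_int x (haA.trans hxA))
  have htail_nonneg : 0 ≤ ∫ u in A..x, d u :=
    intervalIntegral.integral_nonneg hxA fun u hu => (hA u hu.1).2.1.1
  have htail : ∫ u in A..x, d u ≤ δ / (c / 2 / ℓ x) :=
    integral_le_div_of_le_exp_neg_mul_deriv hxA (by positivity) (by positivity)
      (fun u hu => (hA u hu.1).2.2.1)
      (continuousOn_of_forall_continuousAt fun u hu => (hA u hu.1).2.2.2.1) (hA A le_rfl).2.2.2.2.1
      htail_int fun u hu => (hA u hu.1).1 (ℓ x) (hℓ_mono (hx₀A.trans hu.1) (hx₀A.trans hxA) hu.2)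
  have hδ : δ / (c / 2 / ℓ x) = ε / 2 * ℓ x := by
    simp only [δ]
    field_simp
    norm_num
  have hK : |K| ≤ ε / 2 * ℓ x := by
    rw [div_le_iff₀ hε] at hℓK
    linarith
  rw [← intervalIntegral.integral_add_adjacent_intervals (hd_int A haA) htail_int,
    Real.norm_eq_abs, Real.norm_eq_abs, abs_of_pos hℓx]
  calc |K + ∫ u in A..x, d u| ≤ |K| + ∫ u in A..x, d u := by
        simpa [abs_of_nonneg htail_nonneg] using abs_add_le K (∫ u in A..x, d u)
    _ ≤ ε * ℓ x := by linarith [hδ]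

end Integral

theorem isLittleO_primitive_sub_integral_comp_rightInv {f ℓ W Winv : ℝ → ℝ} {x₀ η : ℝ}
    (hη : 0 < η) (hη1 : η < 1) (hf : AntitoneOn f (Ici 0)) (hf_pos : ∀ x, 0 ≤ x → 0 < f x)
    (hf_cont : ContinuousOn f (Ioi 0)) (hfℓ : ∀ u, 0 < u → f u = ℓ u / u)
    (hℓ_slow : ∀ c, 0 < c → Tendsto (fun x => ℓ (c * x) / ℓ x) atTop (𝓝 1))
    (hℓ : Tendsto ℓ atTop atTop) (hℓ_mono : MonotoneOn ℓ (Ici x₀))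
    (hW : ∀ x, W x = ∫ u in (0:ℝ)..x, f u) (hWinv : LeftInvOn Winv W (Ici 0)) :
    (fun x => W x - ∫ u in (0:ℝ)..x, f (u + Winv (η * W (u / η)))) =o[atTop] ℓ := by
  have hW_mono := strictMonoOn_primitive hf hf_pos hW
  have hW_nonneg : ∀ x, 0 ≤ x → 0 ≤ W x := fun _ => primitive_nonneg hf_pos hW
  have hlow := fun a b => mul_log_le_primitive_sub (a := a) (b := b) hf hW hfℓ hℓ_mono
  have hup := fun a b => primitive_sub_le_mul_log (a := a) (b := b) hf hW hfℓ hℓ_mono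
  have hℓ_pos := hℓ.eventually_gt_atTop 0
  have hWℓ := tendsto_primitive_div_atTop hf hf_pos hW hfℓ hℓ_mono hℓ_slow hℓ
  have hW_top : Tendsto W atTop atTop := (hWℓ.atTop_mul_atTop₀ hℓ).congr'
    (hℓ_pos.mono fun x hx => div_mul_cancel₀ _ hx.ne')
  have hsurj := surjOn_primitive hf hW hW_top
  have hmaps := hWinv.mapsTo hsurj
  have hinv := hWinv.rightInvOn_image.mono hsurj
  set Φ := fun u => Winv (η * W (u / η))
  have hΦ_nonneg : ∀ u, 0 ≤ u → 0 ≤ Φ u := fun u hu =>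
    hmaps (mem_Ici.2 (mul_nonneg hη.le (hW_nonneg _ (div_nonneg hu hη.le))))
  have hΦ_decay := eventually_rightInv_comp_div_le_exp hη hη1 hlow hup hW_mono hW_nonneg hinv
    hmaps (hℓ_slow η⁻¹ (inv_pos.2 hη)) hℓ_pos hWℓ hW_top
  have hG : AntitoneOn (fun u => f (u + Φ u)) (Ici 0) :=
    hf.comp_MonotoneOn
      (monotoneOn_id.add (monotoneOn_rightInv_comp hη hW_mono hW_nonneg hinv hmaps))
      fun u hu => add_nonneg hu (hΦ_nonneg u hu)
  have hO := isLittleO_integral_of_le_exp (a := 0) (by linarith : 0 < (1 - η) / 2) hℓ hℓ_mono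
    hWℓ ((eventually_gt_atTop 0).mono fun u hu => hasDerivAt_primitive hf hf_cont hW hu)
    ((eventually_gt_atTop 0).mono fun u hu => hf_cont.continuousAt (Ioi_mem_nhds hu))
    (fun b hb => (intervalIntegrable_of_antitoneOn_Ici hf le_rfl hb).sub
      (intervalIntegrable_of_antitoneOn_Ici hG le_rfl hb))
    (eventually_sub_comp_add_le hf hfℓ hℓ_mono hℓ_pos hΦ_nonneg hΦ_decay)
  refine hO.congr' ((eventually_ge_atTop 0).mono fun x hx => ?_) EventuallyEq.rfl
  dsimp only
  rw [intervalIntegral.integral_sub (intervalIntegrable_of_antitoneOn_Ici hf le_rfl hx)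
    (intervalIntegrable_of_antitoneOn_Ici hG le_rfl hx), ← hW x]

theorem W_sub_WPhi_eta_two_littleO_ell_general
(w ℓ W : ℝ → ℝ)
    (hw_cont : ContinuousOn w (Set.Ici 0))
    (hw_pos : ∀ x, 0 ≤ x → 0 < w x)
    (hw_mono : MonotoneOn w (Set.Ici 0))
    (hwl : ∀ x, 0 < x → w x = x / ℓ x)
    (hl_slow : ∀ c, 0 < c → Tendsto (fun x => ℓ (c * x) / ℓ x) atTop (nhds 1))
    (hl_inf : Tendsto ℓ atTop atTop)
    (hW : ∀ x, W x = ∫ u in (0:ℝ)..x, 1 / w u)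
    (Winv : ℝ → ℝ)
    (hWinv_left : ∀ x, 0 ≤ x → Winv (W x) = x)
    (hl_mono : ∃ x₀ : ℝ, MonotoneOn ℓ (Set.Ici x₀))
    (η : ℝ) (hη : 0 < η) (hη1 : η < 1) :
    Tendsto
      (fun x => (W x - ∫ u in (0:ℝ)..x, 1 / w (u + Winv (η * W (u / η)))) / ℓ x)
      atTop (nhds 0) := by
  obtain ⟨x₀, hl_mono⟩ := hl_mono
  have hf : AntitoneOn (fun u => 1 / w u) (Ici 0) := fun a ha b hb hab =>
    one_div_le_one_div_of_le (hw_pos a ha) (hw_mono ha hb hab)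
  have hf_cont : ContinuousOn (fun u => 1 / w u) (Ioi 0) := continuousOn_const.div
    (hw_cont.mono Ioi_subset_Ici_self) fun u hu => (hw_pos u (le_of_lt hu)).ne'
  exact (isLittleO_primitive_sub_integral_comp_rightInv hη hη1 hf
    (fun x hx => one_div_pos.2 (hw_pos x hx)) hf_cont (fun u hu => by rw [hwl u hu, one_div_div])
    hl_slow hl_inf hl_mono hW fun x hx => hWinv_left x hx).tendsto_div_nhds_zero

/-- For `η ∈ (0,1)`, the function `Φ_{η,2}(x) = W⁻¹(η·W(x/η))` satisfies
`W(x) − W_{Φ_{η,2}}(x) = o(ℓ(x))` as `x → ∞`, where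
`W_ψ(x) = ∫₀ˣ du / w(u + ψ(u))`.  Here `ℓ` is assumed eventually non-decreasing. -/
theorem W_sub_WPhi_eta_two_littleO_ell
(w ℓ W : ℝ → ℝ)
    (hw_cont : ContinuousOn w (Set.Ici 0))
    (hw_pos : ∀ x, 0 ≤ x → 0 < w x)
    (hw_mono : MonotoneOn w (Set.Ici 0))
    (hwl : ∀ x, 0 < x → w x = x / ℓ x)
    (hl_slow : ∀ c, 0 < c → Tendsto (fun x => ℓ (c * x) / ℓ x) atTop (nhds 1))
    (hl_inf : Tendsto ℓ atTop atTop)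
    (hW : ∀ x, W x = ∫ u in (0:ℝ)..x, 1 / w u)
    (Winv : ℝ → ℝ)
    (hWinv_left : ∀ x, 0 ≤ x → Winv (W x) = x)
    (hWinv_right : ∀ x, 0 ≤ x → W (Winv x) = x)
    (hl_mono : ∃ x₀ : ℝ, MonotoneOn ℓ (Set.Ici x₀))
    (η : ℝ) (hη : 0 < η) (hη1 : η < 1) :
    Tendsto
      (fun x => (W x - ∫ u in (0:ℝ)..x, 1 / w (u + Winv (η * W (u / η)))) / ℓ x)
      atTop (nhds 0) :=
  W_sub_WPhi_eta_two_littleO_ell_general w ℓ W hw_cont hw_pos hw_mono hwl hl_slow hl_inf hW Winv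
    hWinv_left hl_mono η hη hη1
end

section
/- Set h(x) := log W^{-1}(x), so that h'(x) = 1/ℓ(W^{-1}(x)), and define J_η(x) := ∫₀ˣ W^{-1}(ηu)/W^{-1}(u) du for η ∈ (0,1). Then h'(x)·J_η(x) → 0 as x → ∞; equivalently, J_η(x) = o(ℓ(W^{-1}(x))). -/
open Filter MeasureTheory Set Real Topology

/-!
Put `g(u) = W⁻¹(ηu)/W⁻¹(u) ∈ [0, 1]` and `L(u) = ℓ(W⁻¹(u))`. Since `W'(s) = ℓ(s)/s` with `ℓ`
eventually monotone, `(1 - η)u = W(y) - W(z) ≤ ℓ(y) log (y/z)` for `z = W⁻¹(ηu)`,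
`y = W⁻¹(u)`, so `g(u) ≤ exp (-(1 - η)u / L(u))`. Slow variation gives
`W(y) ≥ ∫_{cy}^y ℓ(s)/s ds ≳ ℓ(y) log (1/c)` for every `c < 1`, i.e. `u / L(u) → ∞`, hence
`g → 0`. Split `J_η(x)` at `B·L(x)`: the head is `o(L(x))` by Cesàro averaging, and on the
tail `L ≤ L(x)`, so the tail is at most `L(x) e^{-(1-η)B}/(1-η)`. Finally let `B → ∞`.
-/

theorem integral_exp_neg_mul_le {r : ℝ} (hr : 0 < r) (a b : ℝ) :
    ∫ u in a..b, exp (-(r * u)) ≤ exp (-(r * a)) / r := by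
  have h : ∫ u in a..b, exp (-(r * u)) = exp (-(r * a)) / r - exp (-(r * b)) / r := by
    simp only [← neg_mul, intervalIntegral.integral_comp_mul_left (fun u => exp u)
      (neg_ne_zero.2 hr.ne'), integral_exp, smul_eq_mul]
    field_simp
    ring
  rw [h]
  linarith [div_pos (exp_pos (-(r * b))) hr]

theorem norm_integral_le_of_norm_le_exp {g : ℝ → ℝ} {r a b : ℝ} (hr : 0 < r) (hab : a ≤ b)
    (hg : ∀ u ∈ Ioc a b, ‖g u‖ ≤ exp (-(r * u))) :
    ‖∫ u in a..b, g u‖ ≤ exp (-(r * a)) / r :=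
  (intervalIntegral.norm_integral_le_of_norm_le hab (ae_of_all _ hg)
    ((by fun_prop : Continuous fun u => exp (-(r * u))).intervalIntegrable a b)).trans
    (integral_exp_neg_mul_le hr a b)

theorem tendsto_integral_div_self_of_tendsto_zero {g : ℝ → ℝ}
    (hg : ∀ x, 0 ≤ x → IntervalIntegrable g volume 0 x) (hg0 : Tendsto g atTop (𝓝 0)) :
    Tendsto (fun x => (∫ u in 0..x, g u) / x) atTop (𝓝 0) := by
  rw [Metric.tendsto_nhds]
  intro ε hε
  obtain ⟨T, hT⟩ := eventually_atTop.1
    ((hg0.eventually (Metric.closedBall_mem_nhds 0 (half_pos hε))).and (eventually_ge_atTop 0))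
  set C := ‖∫ u in 0..T, g u‖
  filter_upwards [eventually_gt_atTop T, eventually_gt_atTop (2 * C / ε)] with x hxT hxC
  have hT0 : 0 ≤ T := (hT T le_rfl).2
  have hx0 : 0 < x := hT0.trans_lt hxT
  have htail : ‖∫ u in T..x, g u‖ ≤ ε / 2 * x := by
    refine (intervalIntegral.norm_integral_le_of_norm_le_const (C := ε / 2)
      fun u hu => ?_).trans ?_
    · rw [uIoc_of_le hxT.le] at hu
      simpa using (hT u hu.1.le).1
    · rw [abs_of_pos (sub_pos.2 hxT)]
      nlinarith
  have hsplit := intervalIntegral.integral_add_adjacent_intervals (hg T hT0)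
    ((hg T hT0).symm.trans (hg x hx0.le))
  have hC : C < ε / 2 * x := by
    rw [div_lt_iff₀ hε] at hxC
    linarith
  rw [dist_zero_right, norm_div, Real.norm_of_nonneg hx0.le, div_lt_iff₀ hx0, ← hsplit]
  calc ‖(∫ u in 0..T, g u) + ∫ u in T..x, g u‖ ≤ C + ‖∫ u in T..x, g u‖ := norm_add_le _ _
    _ < ε * x := by linarith

theorem tendsto_integral_div_of_norm_le_exp {g L : ℝ → ℝ} {c : ℝ} (hc : 0 < c)
    (hg : ∀ x, 0 ≤ x → IntervalIntegrable g volume 0 x) (hL : Tendsto L atTop atTop)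
    (hL_mono : ∃ T, MonotoneOn L (Ici T)) (hL_growth : Tendsto (fun u => u / L u) atTop atTop)
    (hg_decay : ∀ᶠ u in atTop, ‖g u‖ ≤ exp (-(c * u / L u))) :
    Tendsto (fun x => (∫ u in 0..x, g u) / L x) atTop (𝓝 0) := by
  have hg0 : Tendsto g atTop (𝓝 0) := by
    refine squeeze_zero_norm' hg_decay (tendsto_exp_atBot.comp <| tendsto_neg_atTop_atBot.comp ?_)
    simpa only [mul_div_assoc] using hL_growth.const_mul_atTop hc
  have hmean := tendsto_integral_div_self_of_tendsto_zero hg hg0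
  obtain ⟨T, hT⟩ := hL_mono
  obtain ⟨U, hU⟩ := eventually_atTop.1 <|
    (hg_decay.and (hL.eventually_gt_atTop 0)).and (eventually_ge_atTop T)
  rw [Metric.tendsto_nhds]
  intro ε hε
  have hexp : Tendsto (fun B => exp (-(c * B)) / c) atTop (𝓝 0) := by
    simpa using ((tendsto_exp_atBot.comp <| tendsto_neg_atTop_atBot.comp <|
      tendsto_id.const_mul_atTop hc).div_const c)
  obtain ⟨B, hB, hB0⟩ :=
    ((hexp.eventually (gt_mem_nhds (half_pos hε))).and (eventually_gt_atTop 0)).exists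
  filter_upwards [(hL.const_mul_atTop hB0).eventually_ge_atTop U,
    (hmean.comp (hL.const_mul_atTop hB0)).eventually
      (Metric.ball_mem_nhds 0 (div_pos (half_pos hε) hB0)),
    hL_growth.eventually_ge_atTop B, eventually_ge_atTop U] with x hxU hhead hxB hx
  simp only [Function.comp, dist_zero_right, norm_div] at hhead ⊢
  have hK : 0 < L x := (hU x hx).1.2
  have hBK : 0 < B * L x := mul_pos hB0 hK
  have hBKx : B * L x ≤ x := by rwa [le_div_iff₀ hK] at hxB
  have htail : ‖∫ u in B * L x..x, g u‖ ≤ L x * (exp (-(c * B)) / c) := by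
    have h := norm_integral_le_of_norm_le_exp (g := g) (div_pos hc hK) hBKx fun u hu => ?_
    · convert h using 1
      field_simp
    · obtain ⟨⟨hdecay, hLu⟩, hu0⟩ := hU u (hxU.trans hu.1.le)
      refine hdecay.trans (exp_le_exp.2 (neg_le_neg ?_))
      rw [div_mul_eq_mul_div]
      have := hT hu0 (hu0.trans hu.2) hu.2
      exact div_le_div_of_nonneg_left (mul_pos hc (hBK.trans hu.1)).le hLu this
  have hhead' : ‖∫ u in 0..B * L x, g u‖ < ε / 2 * L x := by
    rw [Real.norm_of_nonneg hBK.le, div_lt_div_iff₀ hBK hB0] at hhead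
    nlinarith
  rw [Real.norm_of_nonneg hK.le, div_lt_iff₀ hK,
    ← intervalIntegral.integral_add_adjacent_intervals (hg _ hBK.le)
      ((hg _ hBK.le).symm.trans (hg x (hBK.le.trans hBKx)))]
  calc _ ≤ ‖∫ u in 0..B * L x, g u‖ + ‖∫ u in B * L x..x, g u‖ := norm_add_le _ _
    _ < ε * L x := by nlinarith [norm_nonneg (exp (-(c * B)) / c)]

section LogIntegral

variable {φ : ℝ → ℝ} {a b : ℝ}

theorem continuousOn_inv_uIcc_of_pos (ha : 0 < a) (hab : a ≤ b) :
    ContinuousOn (fun s : ℝ => s⁻¹) (uIcc a b) :=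
  continuousOn_inv₀.mono fun s hs => by
    rw [uIcc_of_le hab] at hs
    exact (ha.trans_le hs.1).ne'

theorem intervalIntegrable_div_self_of_monotoneOn (ha : 0 < a) (hab : a ≤ b)
    (hφ : MonotoneOn φ (Icc a b)) : IntervalIntegrable (fun s => φ s / s) volume a b := by
  rw [← uIcc_of_le hab] at hφ
  simpa only [div_eq_mul_inv] using
    hφ.intervalIntegrable.mul_continuousOn (continuousOn_inv_uIcc_of_pos ha hab)

theorem mul_log_le_integral_div_self (ha : 0 < a) (hab : a ≤ b) (hφ : MonotoneOn φ (Icc a b)) :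
    φ a * log (b / a) ≤ ∫ s in a..b, φ s / s := by
  rw [← integral_inv_of_pos ha (ha.trans_le hab), ← intervalIntegral.integral_const_mul]
  refine intervalIntegral.integral_mono_on hab
    ((continuousOn_inv_uIcc_of_pos ha hab).intervalIntegrable.const_mul _)
    (intervalIntegrable_div_self_of_monotoneOn ha hab hφ) fun s hs => ?_
  rw [← div_eq_mul_inv]
  exact div_le_div_of_nonneg_right (hφ ⟨le_rfl, hab⟩ hs hs.1) (ha.trans_le hs.1).le

theorem integral_div_self_le_mul_log (ha : 0 < a) (hab : a ≤ b) (hφ : MonotoneOn φ (Icc a b)) :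
    ∫ s in a..b, φ s / s ≤ φ b * log (b / a) := by
  rw [← integral_inv_of_pos ha (ha.trans_le hab), ← intervalIntegral.integral_const_mul]
  refine intervalIntegral.integral_mono_on hab
    (intervalIntegrable_div_self_of_monotoneOn ha hab hφ)
    ((continuousOn_inv_uIcc_of_pos ha hab).intervalIntegrable.const_mul _) fun s hs => ?_
  rw [← div_eq_mul_inv]
  exact div_le_div_of_nonneg_right (hφ hs ⟨hab, le_rfl⟩ hs.2) (ha.trans_le hs.1).le

theorem div_le_exp_neg_integral_div_self (ha : 0 < a) (hab : a ≤ b)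
    (hφ : MonotoneOn φ (Icc a b)) (hφb : 0 < φ b) :
    a / b ≤ exp (-((∫ s in a..b, φ s / s) / φ b)) := by
  rw [← log_le_iff_le_exp (div_pos ha (ha.trans_le hab)), le_neg, ← log_inv, inv_div,
    div_le_iff₀ hφb, mul_comm]
  exact integral_div_self_le_mul_log ha hab hφ

end LogIntegral

theorem tendsto_div_atTop_of_slowlyVarying {ℓ W : ℝ → ℝ} {x₀ : ℝ}
    (hℓ_slow : ∀ c, 0 < c → Tendsto (fun x => ℓ (c * x) / ℓ x) atTop (𝓝 1))
    (hℓ_pos : ∀ x, 0 < x → 0 < ℓ x) (hℓ_mono : MonotoneOn ℓ (Ici x₀))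
    (hW_nonneg : MapsTo W (Ici 0) (Ici 0))
    (hW_sub : ∀ a b, 0 < a → a ≤ b → W b - W a = ∫ s in a..b, ℓ s / s) :
    Tendsto (fun y => W y / ℓ y) atTop atTop := by
  refine tendsto_atTop.2 fun A => ?_
  set A' := max A 1
  have hA' : 0 < A' := zero_lt_one.trans_le (le_max_right _ _)
  set c := exp (-(2 * A'))
  have hc : 0 < c := exp_pos _
  have hc1 : c < 1 := Real.exp_lt_one_iff.2 (by linarith)
  -- `W y ≥ ∫_{cy}^y ℓ(s)/s ds ≥ ℓ(cy) log (1/c) = 2A' ℓ(cy) > A' ℓ(y)`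
  filter_upwards [(hℓ_slow c hc).eventually (lt_mem_nhds one_half_lt_one),
    eventually_ge_atTop (max x₀ 1 / c)] with y hratio hy
  rw [div_le_iff₀ hc, mul_comm] at hy
  have hcy : 0 < c * y := zero_lt_one.trans_le ((le_max_right _ _).trans hy)
  have hy0 : 0 < y := pos_of_mul_pos_right hcy hc.le
  have hcyy : c * y ≤ y := by nlinarith
  have hℓy := hℓ_pos y hy0
  have hlog : log (y / (c * y)) = 2 * A' := by
    rw [div_mul_cancel_right₀ hy0.ne', log_inv, log_exp, neg_neg]
  have hint := mul_log_le_integral_div_self hcy hcyy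
    (hℓ_mono.mono (Icc_subset_Ici_self.trans (Ici_subset_Ici.2 ((le_max_left _ _).trans hy))))
  rw [hlog, ← hW_sub _ _ hcy hcyy] at hint
  rw [lt_div_iff₀ hℓy] at hratio
  rw [le_div_iff₀ hℓy]
  nlinarith [mem_Ici.1 (hW_nonneg hcy.le), le_max_left A 1]

section Primitive

variable {f : ℝ → ℝ}

theorem intervalIntegrable_of_continuousOn_Ici (hf : ContinuousOn f (Ici 0)) {a b : ℝ}
    (ha : 0 ≤ a) (hb : 0 ≤ b) : IntervalIntegrable f volume a b :=
  (hf.mono (ordConnected_Ici.uIcc_subset ha hb)).intervalIntegrable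

theorem strictMonoOn_primitive_of_pos (hf : ContinuousOn f (Ici 0))
    (hpos : ∀ x, 0 ≤ x → 0 < f x) : StrictMonoOn (fun x => ∫ u in 0..x, f u) (Ici 0) := by
  intro a ha b hb hab
  have hsplit := intervalIntegral.integral_add_adjacent_intervals
    (intervalIntegrable_of_continuousOn_Ici hf le_rfl ha)
    (intervalIntegrable_of_continuousOn_Ici hf ha hb)
  have hpos := intervalIntegral.intervalIntegral_pos_of_pos_on
    (intervalIntegrable_of_continuousOn_Ici hf ha hb) (fun u hu => hpos u (ha.trans hu.1.le)) hab
  simp only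
  linarith

theorem continuousOn_primitive_Ici_zero (hf : ContinuousOn f (Ici 0)) :
    ContinuousOn (fun x => ∫ u in 0..x, f u) (Ici 0) := by
  intro x hx
  have hx1 : 0 ≤ x + 1 := by linarith [mem_Ici.1 hx]
  have hcont := intervalIntegral.continuousOn_primitive_interval (μ := volume)
    ((hf.mono (ordConnected_Ici.uIcc_subset le_rfl hx1)).integrableOn_compact isCompact_uIcc)
  rw [uIcc_of_le hx1, ← Ici_inter_Iic] at hcont
  exact (hcont x ⟨hx, (lt_add_one x).le⟩).mono_of_mem_nhdsWithin
    (inter_mem_nhdsWithin _ (Iic_mem_nhds (lt_add_one x)))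

end Primitive

section Inverse

variable {F G : ℝ → ℝ}

theorem mapsTo_Ici_of_leftInvOn (hF0 : F 0 = 0) (hF_cont : ContinuousOn F (Ici 0))
    (hF_top : Tendsto F atTop atTop) (hGF : LeftInvOn G F (Ici 0)) : MapsTo G (Ici 0) (Ici 0) := by
  intro v hv
  obtain ⟨b, hb, hb0⟩ := ((hF_top.eventually_ge_atTop v).and (eventually_ge_atTop 0)).exists
  obtain ⟨t, ht, rfl⟩ :=
    intermediate_value_Icc hb0 (hF_cont.mono Icc_subset_Ici_self) ⟨by rwa [hF0], hb⟩
  rw [hGF ht.1]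
  exact ht.1

theorem monotoneOn_of_rightInvOn (hF : StrictMonoOn F (Ici 0)) (hG : MapsTo G (Ici 0) (Ici 0))
    (hFG : RightInvOn G F (Ici 0)) : MonotoneOn G (Ici 0) := fun u hu v hv huv =>
  (hF.le_iff_le (hG hu) (hG hv)).1 (by rwa [hFG hu, hFG hv])

theorem tendsto_atTop_of_leftInvOn (hG : MonotoneOn G (Ici 0)) (hF : MapsTo F (Ici 0) (Ici 0))
    (hGF : LeftInvOn G F (Ici 0)) : Tendsto G atTop atTop := by
  refine tendsto_atTop.2 fun M => ?_
  have hM : max M 0 ∈ Ici 0 := le_max_right M 0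
  filter_upwards [eventually_ge_atTop (F (max M 0))] with v hv
  calc M ≤ max M 0 := le_max_left _ _
    _ = G (F (max M 0)) := (hGF hM).symm
    _ ≤ G v := hG (hF hM) (mem_Ici.2 ((hF hM).trans hv)) hv

end Inverse

theorem intervalIntegrable_div_of_monotoneOn {f₁ f₂ : ℝ → ℝ} {a b : ℝ} (hab : a ≤ b)
    (h₁ : MonotoneOn f₁ (Icc a b)) (h₂ : MonotoneOn f₂ (Icc a b))
    (h : ∀ u ∈ Icc a b, 0 ≤ f₁ u ∧ f₁ u ≤ f₂ u) :
    IntervalIntegrable (fun u => f₁ u / f₂ u) volume a b := by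
  rw [intervalIntegrable_iff_integrableOn_Icc_of_le hab]
  refine Integrable.mono' (integrable_const 1)
    ((aemeasurable_restrict_of_monotoneOn measurableSet_Icc h₁).div
      (aemeasurable_restrict_of_monotoneOn measurableSet_Icc h₂)).aestronglyMeasurable
    (ae_restrict_of_forall_mem measurableSet_Icc fun u hu => ?_)
  obtain ⟨h₁₀, h₁₂⟩ := h u hu
  rw [Real.norm_of_nonneg (div_nonneg h₁₀ (h₁₀.trans h₁₂))]
  exact div_le_one_of_le₀ h₁₂ (h₁₀.trans h₁₂)


theorem eventually_norm_ratio_le_exp {ℓ W G : ℝ → ℝ} {x₀ η : ℝ}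
    (hℓ_pos : ∀ x, 0 < x → 0 < ℓ x) (hℓ_mono : MonotoneOn ℓ (Ici x₀))
    (hW_sub : ∀ a b, 0 < a → a ≤ b → W b - W a = ∫ s in a..b, ℓ s / s)
    (hWG : RightInvOn G W (Ici 0)) (hG_mono : MonotoneOn G (Ici 0))
    (hG_top : Tendsto G atTop atTop) (hη : 0 < η) (hη1 : η ≤ 1) :
    ∀ᶠ u in atTop, ‖G (η * u) / G u‖ ≤ exp (-((1 - η) * u / ℓ (G u))) := by
  filter_upwards [(hG_top.comp (tendsto_id.const_mul_atTop hη)).eventually_ge_atTop (max x₀ 1),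
    eventually_ge_atTop 0] with u hz hu
  have hηu : 0 ≤ η * u := mul_nonneg hη.le hu
  have hz0 : 0 < G (η * u) := zero_lt_one.trans_le ((le_max_right _ _).trans hz)
  have hzy : G (η * u) ≤ G u := hG_mono hηu hu (mul_le_of_le_one_left hu hη1)
  have h := div_le_exp_neg_integral_div_self hz0 hzy
    (hℓ_mono.mono fun s hs => (le_max_left _ _).trans (hz.trans hs.1))
    (hℓ_pos _ (hz0.trans_le hzy))
  rw [← hW_sub _ _ hz0 hzy, hWG hu, hWG hηu] at h
  rw [Real.norm_of_nonneg (div_nonneg hz0.le (hz0.le.trans hzy))]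
  convert h using 4
  ring

theorem tendsto_integral_inverse_ratio_div {ℓ W G : ℝ → ℝ} {x₀ η : ℝ}
    (hℓ_slow : ∀ c, 0 < c → Tendsto (fun x => ℓ (c * x) / ℓ x) atTop (𝓝 1))
    (hℓ_top : Tendsto ℓ atTop atTop) (hℓ_pos : ∀ x, 0 < x → 0 < ℓ x)
    (hℓ_mono : MonotoneOn ℓ (Ici x₀)) (hW : StrictMonoOn W (Ici 0))
    (hW_cont : ContinuousOn W (Ici 0)) (hW0 : W 0 = 0)
    (hW_sub : ∀ a b, 0 < a → a ≤ b → W b - W a = ∫ s in a..b, ℓ s / s)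
    (hGW : LeftInvOn G W (Ici 0)) (hWG : RightInvOn G W (Ici 0)) (hη : 0 < η) (hη1 : η < 1) :
    Tendsto (fun x => (∫ u in 0..x, G (η * u) / G u) / ℓ (G x)) atTop (𝓝 0) := by
  have hW_nonneg : MapsTo W (Ici 0) (Ici 0) := fun x hx =>
    hW0 ▸ hW.monotoneOn self_mem_Ici hx hx
  have hW_growth :=
    tendsto_div_atTop_of_slowlyVarying hℓ_slow hℓ_pos hℓ_mono hW_nonneg hW_sub
  have hW_top : Tendsto W atTop atTop := by
    refine (hW_growth.atTop_mul_atTop₀ hℓ_top).congr' ?_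
    filter_upwards [eventually_gt_atTop 0] with y hy
    exact div_mul_cancel₀ _ (hℓ_pos y hy).ne'
  have hG_nonneg := mapsTo_Ici_of_leftInvOn hW0 hW_cont hW_top hGW
  have hG_mono := monotoneOn_of_rightInvOn hW hG_nonneg hWG
  have hG_top := tendsto_atTop_of_leftInvOn hG_mono hW_nonneg hGW
  obtain ⟨T, hT⟩ :=
    eventually_atTop.1 ((hG_top.eventually_ge_atTop x₀).and (eventually_ge_atTop 0))
  refine tendsto_integral_div_of_norm_le_exp (sub_pos.2 hη1) (fun x hx => ?_)
    (hℓ_top.comp hG_top) ⟨T, fun u hu v hv huv => ?_⟩ ?_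
    (eventually_norm_ratio_le_exp hℓ_pos hℓ_mono hW_sub hWG hG_mono hG_top hη hη1.le)
  · refine intervalIntegrable_div_of_monotoneOn hx (fun a ha b hb hab => ?_)
      (hG_mono.mono Icc_subset_Ici_self) fun u hu =>
        ⟨hG_nonneg (mul_nonneg hη.le hu.1), hG_mono (mul_nonneg hη.le hu.1) hu.1
          (mul_le_of_le_one_left hu.1 hη1.le)⟩
    exact hG_mono (mul_nonneg hη.le ha.1) (mul_nonneg hη.le hb.1)
      (mul_le_mul_of_nonneg_left hab hη.le)
  · exact hℓ_mono (hT u hu).1 (hT v hv).1 (hG_mono (hT u hu).2 (hT v hv).2 huv)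
  · refine (hW_growth.comp hG_top).congr' ?_
    filter_upwards [eventually_ge_atTop 0] with u hu
    simp only [Function.comp, hWG hu]

theorem J_eta_littleO_general
(w ℓ W : ℝ → ℝ)
    (hw_cont : ContinuousOn w (Set.Ici 0))
    (hw_pos : ∀ x, 0 ≤ x → 0 < w x)
    (hwl : ∀ x, 0 < x → w x = x / ℓ x)
    (hl_slow : ∀ c, 0 < c → Tendsto (fun x => ℓ (c * x) / ℓ x) atTop (nhds 1))
    (hl_inf : Tendsto ℓ atTop atTop)
    (hW : ∀ x, W x = ∫ u in (0:ℝ)..x, 1 / w u)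
    (Winv : ℝ → ℝ)
    (hWinv_left : ∀ x, 0 ≤ x → Winv (W x) = x)
    (hWinv_right : ∀ x, 0 ≤ x → W (Winv x) = x)
    (hl_mono : ∃ x₀ : ℝ, MonotoneOn ℓ (Set.Ici x₀))
    (η : ℝ) (hη : 0 < η) (hη1 : η < 1) :
    Tendsto
      (fun x => (∫ u in (0:ℝ)..x, Winv (η * u) / Winv u) / ℓ (Winv x))
      atTop (nhds 0) := by
  obtain ⟨x₀, hℓ_mono⟩ := hl_mono
  have hf : ContinuousOn (fun u => 1 / w u) (Ici 0) :=
    continuousOn_const.div hw_cont fun u hu => (hw_pos u hu).ne'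
  have hW_eq : W = fun x => ∫ u in (0:ℝ)..x, 1 / w u := funext hW
  refine tendsto_integral_inverse_ratio_div hl_slow hl_inf (fun x hx => ?_) hℓ_mono
    (hW_eq ▸ strictMonoOn_primitive_of_pos hf fun u hu => one_div_pos.2 (hw_pos u hu))
    (hW_eq ▸ continuousOn_primitive_Ici_zero hf) (by simp [hW]) (fun a b ha hab => ?_)
    hWinv_left hWinv_right hη hη1
  · exact (div_pos_iff_of_pos_left hx).1 (hwl x hx ▸ hw_pos x hx.le)
  · rw [hW, hW, intervalIntegral.integral_interval_sub_left
      (intervalIntegrable_of_continuousOn_Ici hf le_rfl (ha.le.trans hab))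
      (intervalIntegrable_of_continuousOn_Ici hf le_rfl ha.le)]
    refine intervalIntegral.integral_congr fun s hs => ?_
    rw [uIcc_of_le hab] at hs
    simp only [hwl s (ha.trans_le hs.1), one_div_div]

/-- With `h(x) = log W⁻¹(x)` (so `h'(x) = 1/ℓ(W⁻¹(x))`) and
`J_η(x) = ∫₀ˣ W⁻¹(ηu)/W⁻¹(u) du` for `η ∈ (0,1)`, one has
`h'(x)·J_η(x) → 0`, i.e. `J_η(x) = o(ℓ(W⁻¹(x)))` as `x → ∞`. -/
theorem J_eta_littleO
(w ℓ W : ℝ → ℝ)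
    (hw_cont : ContinuousOn w (Set.Ici 0))
    (hw_pos : ∀ x, 0 ≤ x → 0 < w x)
    (hw_mono : MonotoneOn w (Set.Ici 0))
    (hwl : ∀ x, 0 < x → w x = x / ℓ x)
    (hl_slow : ∀ c, 0 < c → Tendsto (fun x => ℓ (c * x) / ℓ x) atTop (nhds 1))
    (hl_inf : Tendsto ℓ atTop atTop)
    (hW : ∀ x, W x = ∫ u in (0:ℝ)..x, 1 / w u)
    (Winv : ℝ → ℝ)
    (hWinv_left : ∀ x, 0 ≤ x → Winv (W x) = x)
    (hWinv_right : ∀ x, 0 ≤ x → W (Winv x) = x)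
    (hl_mono : ∃ x₀ : ℝ, MonotoneOn ℓ (Set.Ici x₀))
    (η : ℝ) (hη : 0 < η) (hη1 : η < 1) :
    Tendsto
      (fun x => (∫ u in (0:ℝ)..x, Winv (η * u) / Winv u) / ℓ (Winv x))
      atTop (nhds 0) :=
  J_eta_littleO_general w ℓ W hw_cont hw_pos hwl hl_slow hl_inf hW Winv hWinv_left hWinv_right
    hl_mono η hη hη1
end

section
/- The operator H defined on homeomorphisms f of [0,∞) by H(f)(x) := W^{-1}(∫₀ˣ du / w(f^{-1}(u))) is monotone: (i) if f ≤ g pointwise then H(f) ≤ H(g) pointwise; (ii) if f(x) ≤ g(x) for all sufficiently large x and H(f) is unbounded, then limsup_{x→∞} H(f)(x)/H(g)(x) ≤ 1. -/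
/-!
Write `A_f x = ∫₀ˣ du / w (f⁻¹ u)`, so that `W (H f x) = A_f x`. If `f ≤ g` on `[M, ∞)` then
`g⁻¹ ≤ f⁻¹` on `[f M, ∞)`, and as `1 / w` is decreasing, `A_f x ≤ A_g x + A_f (f M)` there.
For (i) take `M = 0`, where the constant vanishes, and use that `W` is increasing.
For (ii), `W (c y) - W y ≥ (1 - 1/c) ℓ (c y) → ∞` for every `c > 1`, so the constant is eventually
absorbed: `W (H f x) ≤ W (H g x) + A_f (f M) ≤ W (c · H g x)`, once `H g x` is large, which
follows from `H f → ∞`.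
-/

open Filter MeasureTheory Set

structure IsIciHomeomorph (f finv : ℝ → ℝ) : Prop where
  strictMonoOn : StrictMonoOn f (Ici 0)
  map_zero : f 0 = 0
  continuousOn : ContinuousOn f (Ici 0)
  tendsto_atTop : Tendsto f atTop atTop
  leftInvOn : LeftInvOn finv f (Ici 0)

namespace IsIciHomeomorph

variable {f g finv ginv : ℝ → ℝ}

theorem surjOn (hf : IsIciHomeomorph f finv) : SurjOn f (Ici 0) (Ici 0) := by
  intro y hy
  exact intermediate_value_Ici hf.continuousOn hf.tendsto_atTop (by rwa [hf.map_zero])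

theorem mapsTo (hf : IsIciHomeomorph f finv) : MapsTo f (Ici 0) (Ici 0) := fun _ hx =>
  hf.map_zero ▸ hf.strictMonoOn.monotoneOn self_mem_Ici hx hx

theorem inv_mapsTo (hf : IsIciHomeomorph f finv) : MapsTo finv (Ici 0) (Ici 0) :=
  hf.leftInvOn.mapsTo hf.surjOn

theorem rightInvOn (hf : IsIciHomeomorph f finv) : RightInvOn finv f (Ici 0) :=
  hf.surjOn.leftInvOn_of_rightInvOn hf.leftInvOn

theorem inv_monotoneOn (hf : IsIciHomeomorph f finv) : MonotoneOn finv (Ici 0) := by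
  intro u hu v hv huv
  obtain ⟨x, hx, rfl⟩ := hf.surjOn hu
  obtain ⟨y, hy, rfl⟩ := hf.surjOn hv
  rw [hf.leftInvOn hx, hf.leftInvOn hy]
  exact (hf.strictMonoOn.le_iff_le hx hy).mp huv

theorem inv_le_inv_of_le (hf : IsIciHomeomorph f finv) (hg : IsIciHomeomorph g ginv) {M : ℝ}
    (hM : 0 ≤ M) (hfg : ∀ x, M ≤ x → f x ≤ g x) {u : ℝ} (hu : f M ≤ u) : ginv u ≤ finv u := by
  have hu0 : 0 ≤ u := (hf.mapsTo hM).trans hu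
  obtain ⟨x, hx, rfl⟩ := hf.surjOn hu0
  have hfgx := hfg x ((hf.strictMonoOn.le_iff_le hM hx).mp hu)
  calc ginv (f x) ≤ ginv (g x) := hg.inv_monotoneOn hu0 (hu0.trans hfgx) hfgx
    _ = finv (f x) := by rw [hg.leftInvOn hx, hf.leftInvOn hx]

end IsIciHomeomorph

theorem antitoneOn_one_div_comp {w φ : ℝ → ℝ} {s t : Set ℝ} (hw_pos : ∀ x ∈ t, 0 < w x)
    (hw : MonotoneOn w t) (hφ : MonotoneOn φ s) (hφst : MapsTo φ s t) :
    AntitoneOn (fun u => 1 / w (φ u)) s := fun _ hu _ hv huv =>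
  one_div_le_one_div_of_le (hw_pos _ (hφst hu)) (hw (hφst hu) (hφst hv) (hφ hu hv huv))

section Primitive

variable {F G : ℝ → ℝ}

theorem AntitoneOn.intervalIntegrable_of_nonneg (hF : AntitoneOn F (Ici 0)) {a b : ℝ}
    (ha : 0 ≤ a) (hb : 0 ≤ b) : IntervalIntegrable F volume a b :=
  (hF.mono fun _ hx => (le_inf ha hb).trans hx.1).intervalIntegrable

theorem sub_mul_le_integral_of_antitoneOn {a b : ℝ} (hab : a ≤ b) (hF : AntitoneOn F (Icc a b)) :
    (b - a) * F b ≤ ∫ u in a..b, F u := by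
  calc (b - a) * F b = ∫ _ in a..b, F b := by simp
    _ ≤ ∫ u in a..b, F u :=
      intervalIntegral.integral_mono_on hab intervalIntegrable_const
        (hF.mono (uIcc_of_le hab).subset).intervalIntegrable
        fun _ hx => hF hx ⟨hab, le_rfl⟩ hx.2

theorem integral_eq_add_integral (hF : AntitoneOn F (Ici 0)) {a b : ℝ} (ha : 0 ≤ a) (hb : 0 ≤ b) :
    ∫ u in (0:ℝ)..b, F u = (∫ u in (0:ℝ)..a, F u) + ∫ u in a..b, F u :=
  (intervalIntegral.integral_add_adjacent_intervals
    (hF.intervalIntegrable_of_nonneg le_rfl ha) (hF.intervalIntegrable_of_nonneg ha hb)).symm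

theorem monotoneOn_primitive (hF : AntitoneOn F (Ici 0)) (hF0 : ∀ u, 0 ≤ u → 0 ≤ F u) :
    MonotoneOn (fun x => ∫ u in (0:ℝ)..x, F u) (Ici 0) := fun a ha b hb hab => by
  dsimp only
  rw [integral_eq_add_integral hF ha hb]
  exact le_add_of_nonneg_right
    (intervalIntegral.integral_nonneg hab fun u hu => hF0 u (ha.trans hu.1))

theorem mapsTo_primitive (hF0 : ∀ u, 0 ≤ u → 0 ≤ F u) :
    MapsTo (fun x => ∫ u in (0:ℝ)..x, F u) (Ici 0) (Ici 0) := fun _ hx =>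
  intervalIntegral.integral_nonneg hx fun u hu => hF0 u hu.1

theorem continuousOn_primitive (hF : AntitoneOn F (Ici 0)) :
    ContinuousOn (fun x => ∫ u in (0:ℝ)..x, F u) (Ici 0) := by
  intro b hb
  have hb1 : (0:ℝ) ≤ b + 1 := by linarith [mem_Ici.mp hb]
  have h := intervalIntegral.continuousOn_primitive_interval'
    (hF.intervalIntegrable_of_nonneg le_rfl hb1) left_mem_uIcc
  rw [uIcc_of_le hb1] at h
  refine (h b ⟨hb, by linarith⟩).mono_of_mem_nhdsWithin ?_
  exact mem_nhdsWithin.mpr ⟨Iio (b + 1), isOpen_Iio, by simp, fun y hy => ⟨hy.2, hy.1.le⟩⟩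

theorem integral_le_integral_add_of_le (hF : AntitoneOn F (Ici 0)) (hG : AntitoneOn G (Ici 0))
    (hG0 : ∀ u, 0 ≤ u → 0 ≤ G u) {U x : ℝ} (hU : 0 ≤ U) (hUx : U ≤ x)
    (hFG : ∀ u, U ≤ u → F u ≤ G u) :
    ∫ u in (0:ℝ)..x, F u ≤ (∫ u in (0:ℝ)..x, G u) + ∫ u in (0:ℝ)..U, F u := by
  have hx : 0 ≤ x := hU.trans hUx
  rw [integral_eq_add_integral hF hU hx, integral_eq_add_integral hG hU hx]
  have hUx_le : ∫ u in U..x, F u ≤ ∫ u in U..x, G u :=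
    intervalIntegral.integral_mono_on hUx (hF.intervalIntegrable_of_nonneg hU hx)
      (hG.intervalIntegrable_of_nonneg hU hx) fun u hu => hFG u hu.1
  have hG_nonneg : 0 ≤ ∫ u in (0:ℝ)..U, G u := mapsTo_primitive hG0 hU
  linarith

end Primitive

section PrimitiveOneDiv

variable {w ℓ W Winv : ℝ → ℝ}

theorem antitoneOn_one_div (hw_pos : ∀ x, 0 ≤ x → 0 < w x) (hw_mono : MonotoneOn w (Ici 0)) :
    AntitoneOn (fun u => 1 / w u) (Ici 0) :=
  antitoneOn_one_div_comp hw_pos hw_mono monotoneOn_id (mapsTo_id _)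

theorem sub_div_mul_le_integral_one_div (hw_pos : ∀ x, 0 ≤ x → 0 < w x)
    (hw_mono : MonotoneOn w (Ici 0)) (hwl : ∀ x, 0 < x → w x = x / ℓ x) {a b : ℝ} (ha : 0 ≤ a)
    (hab : a ≤ b) (hb : 0 < b) : (b - a) / b * ℓ b ≤ ∫ u in a..b, 1 / w u := by
  have h := sub_mul_le_integral_of_antitoneOn hab
    ((antitoneOn_one_div hw_pos hw_mono).mono fun _ hu => ha.trans hu.1)
  rw [hwl b hb, one_div_div] at h
  calc (b - a) / b * ℓ b = (b - a) * (ℓ b / b) := by ring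
    _ ≤ _ := h

theorem isIciHomeomorph_primitive_one_div (hw_pos : ∀ x, 0 ≤ x → 0 < w x)
    (hw_mono : MonotoneOn w (Ici 0)) (hwl : ∀ x, 0 < x → w x = x / ℓ x)
    (hl_inf : Tendsto ℓ atTop atTop) (hW : ∀ x, W x = ∫ u in (0:ℝ)..x, 1 / w u)
    (hWinv : ∀ x, 0 ≤ x → Winv (W x) = x) : IsIciHomeomorph W Winv := by
  have hw_inv := antitoneOn_one_div hw_pos hw_mono
  obtain rfl : W = fun x => ∫ u in (0:ℝ)..x, 1 / w u := funext hW
  refine ⟨fun a ha b hb hab => ?_, by simp, continuousOn_primitive hw_inv, ?_, hWinv⟩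
  · have h := sub_mul_le_integral_of_antitoneOn hab.le (hw_inv.mono fun _ hu => ha.trans hu.1)
    have h_pos : 0 < (b - a) * (1 / w b) := mul_pos (sub_pos.2 hab) (one_div_pos.2 (hw_pos b hb))
    simp only [integral_eq_add_integral hw_inv ha hb]
    linarith
  · refine tendsto_atTop_mono' _ ?_ hl_inf
    filter_upwards [eventually_gt_atTop 0] with x hx
    simpa [hx.ne'] using sub_div_mul_le_integral_one_div hw_pos hw_mono hwl le_rfl hx.le hx

theorem tendsto_primitive_one_div_mul_sub (hw_pos : ∀ x, 0 ≤ x → 0 < w x)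
    (hw_mono : MonotoneOn w (Ici 0)) (hwl : ∀ x, 0 < x → w x = x / ℓ x)
    (hl_inf : Tendsto ℓ atTop atTop) (hW : ∀ x, W x = ∫ u in (0:ℝ)..x, 1 / w u) {c : ℝ}
    (hc : 1 < c) : Tendsto (fun y => W (c * y) - W y) atTop atTop := by
  have hw_inv := antitoneOn_one_div hw_pos hw_mono
  have hc0 : 0 < c := by linarith
  have hℓ : Tendsto (fun y => (c - 1) / c * ℓ (c * y)) atTop atTop :=
    (hl_inf.comp (tendsto_id.const_mul_atTop hc0)).const_mul_atTop
      (div_pos (sub_pos.2 hc) hc0)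
  refine tendsto_atTop_mono' _ ?_ hℓ
  filter_upwards [eventually_gt_atTop 0] with y hy
  have hyc : y ≤ c * y := le_mul_of_one_le_left hy.le hc.le
  have hcy : 0 < c * y := mul_pos hc0 hy
  calc (c - 1) / c * ℓ (c * y) = (c * y - y) / (c * y) * ℓ (c * y) := by
        field_simp
    _ ≤ ∫ u in y..c * y, 1 / w u :=
      sub_div_mul_le_integral_one_div hw_pos hw_mono hwl hy.le hyc hcy
    _ = W (c * y) - W y := by
      rw [hW, hW, integral_eq_add_integral hw_inv hy.le hcy.le]
      ring

end PrimitiveOneDiv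

noncomputable def Hop (w Winv finv : ℝ → ℝ) (x : ℝ) : ℝ := Winv (∫ u in (0:ℝ)..x, 1 / w (finv u))

section Hop

variable {w W Winv f g finv ginv : ℝ → ℝ}

theorem IsIciHomeomorph.antitoneOn_one_div_comp_inv (hw_pos : ∀ x, 0 ≤ x → 0 < w x)
    (hw_mono : MonotoneOn w (Ici 0)) (hf : IsIciHomeomorph f finv) :
    AntitoneOn (fun u => 1 / w (finv u)) (Ici 0) :=
  antitoneOn_one_div_comp hw_pos hw_mono hf.inv_monotoneOn hf.inv_mapsTo

theorem IsIciHomeomorph.one_div_comp_inv_nonneg (hw_pos : ∀ x, 0 ≤ x → 0 < w x)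
    (hf : IsIciHomeomorph f finv) {u : ℝ} (hu : 0 ≤ u) : 0 ≤ 1 / w (finv u) :=
  (one_div_pos.2 (hw_pos _ (hf.inv_mapsTo hu))).le

theorem mapsTo_Hop (hw_pos : ∀ x, 0 ≤ x → 0 < w x) (hW : IsIciHomeomorph W Winv)
    (hf : IsIciHomeomorph f finv) : MapsTo (Hop w Winv finv) (Ici 0) (Ici 0) :=
  hW.inv_mapsTo.comp (mapsTo_primitive fun _ => hf.one_div_comp_inv_nonneg hw_pos)

theorem monotoneOn_Hop (hw_pos : ∀ x, 0 ≤ x → 0 < w x) (hw_mono : MonotoneOn w (Ici 0))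
    (hW : IsIciHomeomorph W Winv) (hf : IsIciHomeomorph f finv) :
    MonotoneOn (Hop w Winv finv) (Ici 0) :=
  hW.inv_monotoneOn.comp
    (monotoneOn_primitive (hf.antitoneOn_one_div_comp_inv hw_pos hw_mono)
      fun _ => hf.one_div_comp_inv_nonneg hw_pos)
    (mapsTo_primitive fun _ => hf.one_div_comp_inv_nonneg hw_pos)

theorem apply_Hop_eq_integral (hw_pos : ∀ x, 0 ≤ x → 0 < w x) (hW : IsIciHomeomorph W Winv)
    (hf : IsIciHomeomorph f finv) {x : ℝ} (hx : 0 ≤ x) :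
    W (Hop w Winv finv x) = ∫ u in (0:ℝ)..x, 1 / w (finv u) :=
  hW.rightInvOn (mapsTo_primitive (fun _ => hf.one_div_comp_inv_nonneg hw_pos) hx)

theorem apply_Hop_le_apply_Hop_add (hw_pos : ∀ x, 0 ≤ x → 0 < w x)
    (hw_mono : MonotoneOn w (Ici 0)) (hW : IsIciHomeomorph W Winv)
    (hf : IsIciHomeomorph f finv) (hg : IsIciHomeomorph g ginv) {M : ℝ} (hM : 0 ≤ M)
    (hfg : ∀ x, M ≤ x → f x ≤ g x) {x : ℝ} (hx : f M ≤ x) :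
    W (Hop w Winv finv x) ≤ W (Hop w Winv ginv x) + ∫ u in (0:ℝ)..f M, 1 / w (finv u) := by
  have hfM : 0 ≤ f M := hf.mapsTo hM
  rw [apply_Hop_eq_integral hw_pos hW hf (hfM.trans hx),
    apply_Hop_eq_integral hw_pos hW hg (hfM.trans hx)]
  refine integral_le_integral_add_of_le (hf.antitoneOn_one_div_comp_inv hw_pos hw_mono)
    (hg.antitoneOn_one_div_comp_inv hw_pos hw_mono) (fun _ => hg.one_div_comp_inv_nonneg hw_pos)
    hfM hx fun u hu => ?_
  have hu0 : 0 ≤ u := hfM.trans hu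
  exact one_div_le_one_div_of_le (hw_pos _ (hg.inv_mapsTo hu0))
    (hw_mono (hg.inv_mapsTo hu0) (hf.inv_mapsTo hu0) (hf.inv_le_inv_of_le hg hM hfg hu))

end Hop

theorem tendsto_atTop_of_monotoneOn_of_not_bddAbove {α β : Type*} [Preorder α] [LinearOrder β]
    {h : α → β} {a : α} (hmono : MonotoneOn h (Ici a)) (hunb : ¬BddAbove (h '' Ici a)) :
    Tendsto h atTop atTop := by
  refine tendsto_atTop.2 fun K => ?_
  obtain ⟨_, ⟨x, hx, rfl⟩, hKx⟩ := not_bddAbove_iff.mp hunb K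
  filter_upwards [eventually_ge_atTop x] with y hy
  exact hKx.le.trans (hmono hx (le_trans hx hy) hy)

theorem tendsto_atTop_of_tendsto_comp_of_monotoneOn {ι : Type*} {l : Filter ι} {W : ℝ → ℝ}
    {q : ι → ℝ} (hW : MonotoneOn W (Ici 0)) (hq : ∀ᶠ i in l, 0 ≤ q i)
    (hWq : Tendsto (fun i => W (q i)) l atTop) : Tendsto q l atTop := by
  refine tendsto_atTop.2 fun K => ?_
  filter_upwards [hq, hWq.eventually_gt_atTop (W (max K 0))] with i hqi hWqi
  by_contra! hlt
  have := hW hqi (le_max_right K 0) (hlt.le.trans (le_max_left K 0))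
  linarith

theorem limsup_div_le_one {ι : Type*} {l : Filter ι} [l.NeBot] {W : ℝ → ℝ} {p q : ι → ℝ}
    {C : ℝ} (hW : StrictMonoOn W (Ici 0)) (hW_top : Tendsto W atTop atTop)
    (hgap : ∀ c, 1 < c → Tendsto (fun y => W (c * y) - W y) atTop atTop)
    (hp : ∀ᶠ i in l, 0 ≤ p i) (hq : ∀ᶠ i in l, 0 ≤ q i) (hp_top : Tendsto p l atTop)
    (hpq : ∀ᶠ i in l, W (p i) ≤ W (q i) + C) : limsup (fun i => p i / q i) l ≤ 1 := by
  have hq_top : Tendsto q l atTop := by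
    refine tendsto_atTop_of_tendsto_comp_of_monotoneOn hW.monotoneOn hq ?_
    refine tendsto_atTop_mono' l ?_ (tendsto_atTop_add_const_right l (-C) (hW_top.comp hp_top))
    filter_upwards [hpq] with i hi
    simp only [Function.comp_apply]
    linarith
  have hcobdd : IsCoboundedUnder (· ≤ ·) l (fun i => p i / q i) :=
    isCoboundedUnder_le_of_eventually_le l (x := 0)
      (by filter_upwards [hp, hq] with i hpi hqi using div_nonneg hpi hqi)
  refine le_of_forall_pos_le_add fun ε hε => limsup_le_of_le hcobdd ?_
  have hgap_q := ((hgap (1 + ε) (by linarith)).comp hq_top).eventually_ge_atTop C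
  filter_upwards [hp, hq_top.eventually_gt_atTop 0, hgap_q, hpq] with i hpi hqi hgapi hpqi
  simp only [Function.comp_apply] at hgapi
  have hle : p i ≤ (1 + ε) * q i :=
    (hW.le_iff_le hpi (mul_pos (by linarith) hqi).le).mp (by linarith)
  exact (div_le_iff₀ hqi).2 hle

theorem Hop_monotone_general
(w ℓ W : ℝ → ℝ)
    (hw_pos : ∀ x, 0 ≤ x → 0 < w x)
    (hw_mono : MonotoneOn w (Set.Ici 0))
    (hwl : ∀ x, 0 < x → w x = x / ℓ x)
    (hl_inf : Tendsto ℓ atTop atTop)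
    (hW : ∀ x, W x = ∫ u in (0:ℝ)..x, 1 / w u)
    (Winv : ℝ → ℝ)
    (hWinv_left : ∀ x, 0 ≤ x → Winv (W x) = x)
    (f g finv ginv : ℝ → ℝ)
    (hf_mono : StrictMonoOn f (Set.Ici 0)) (hg_mono : StrictMonoOn g (Set.Ici 0))
    (hf0 : f 0 = 0) (hg0 : g 0 = 0)
    (hf_inf : Tendsto f atTop atTop) (hg_inf : Tendsto g atTop atTop)
    (hf_cont : ContinuousOn f (Set.Ici 0)) (hg_cont : ContinuousOn g (Set.Ici 0))
    (hfinv_left : ∀ x, 0 ≤ x → finv (f x) = x)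
    (hginv_left : ∀ x, 0 ≤ x → ginv (g x) = x)
    (Hf Hg : ℝ → ℝ)
    (hHf : ∀ x, Hf x = Winv (∫ u in (0:ℝ)..x, 1 / w (finv u)))
    (hHg : ∀ x, Hg x = Winv (∫ u in (0:ℝ)..x, 1 / w (ginv u))) :
    ((∀ x, 0 ≤ x → f x ≤ g x) → ∀ x, 0 ≤ x → Hf x ≤ Hg x) ∧
    ((∀ᶠ x in atTop, f x ≤ g x) → ¬ BddAbove (Hf '' Set.Ici 0) →
      limsup (fun x => Hf x / Hg x) atTop ≤ 1) := by
  have hf : IsIciHomeomorph f finv := ⟨hf_mono, hf0, hf_cont, hf_inf, hfinv_left⟩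
  have hg : IsIciHomeomorph g ginv := ⟨hg_mono, hg0, hg_cont, hg_inf, hginv_left⟩
  have hWW : IsIciHomeomorph W Winv :=
    isIciHomeomorph_primitive_one_div hw_pos hw_mono hwl hl_inf hW hWinv_left
  obtain rfl : Hf = Hop w Winv finv := funext hHf
  obtain rfl : Hg = Hop w Winv ginv := funext hHg
  have hHf0 := mapsTo_Hop hw_pos hWW hf
  have hHg0 := mapsTo_Hop hw_pos hWW hg
  refine ⟨fun hfg x hx => ?_, fun hfg hunb => ?_⟩
  · have h := apply_Hop_le_apply_Hop_add hw_pos hw_mono hWW hf hg le_rfl hfg (hf0.symm ▸ hx)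
    rw [hf0, intervalIntegral.integral_same, add_zero] at h
    exact (hWW.strictMonoOn.le_iff_le (hHf0 hx) (hHg0 hx)).mp h
  · obtain ⟨M, hM⟩ := eventually_atTop.mp hfg
    have hM0 : 0 ≤ max M 0 := le_max_right M 0
    refine limsup_div_le_one hWW.strictMonoOn hWW.tendsto_atTop
      (fun c hc => tendsto_primitive_one_div_mul_sub hw_pos hw_mono hwl hl_inf hW hc)
      ((eventually_ge_atTop 0).mono fun x hx => hHf0 hx)
      ((eventually_ge_atTop 0).mono fun x hx => hHg0 hx)
      (tendsto_atTop_of_monotoneOn_of_not_bddAbove (monotoneOn_Hop hw_pos hw_mono hWW hf) hunb)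
      ((eventually_ge_atTop (f (max M 0))).mono fun x hx =>
        apply_Hop_le_apply_Hop_add hw_pos hw_mono hWW hf hg hM0
          (fun y hy => hM y ((le_max_left M 0).trans hy)) hx)

/-- Monotonicity of the operator `H(f)(x) = W⁻¹(∫₀ˣ du / w(f⁻¹(u)))` acting on
increasing homeomorphisms `f` of `[0,∞)`:
(i) if `f ≤ g` on `[0,∞)` then `H(f) ≤ H(g)` on `[0,∞)`;
(ii) if `f(x) ≤ g(x)` for all large `x` and `H(f)` is unbounded, then
`limsup H(f)(x)/H(g)(x) ≤ 1`. -/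
theorem Hop_monotone
(w ℓ W : ℝ → ℝ)
    (hw_cont : ContinuousOn w (Set.Ici 0))
    (hw_pos : ∀ x, 0 ≤ x → 0 < w x)
    (hw_mono : MonotoneOn w (Set.Ici 0))
    (hwl : ∀ x, 0 < x → w x = x / ℓ x)
    (hl_slow : ∀ c, 0 < c → Tendsto (fun x => ℓ (c * x) / ℓ x) atTop (nhds 1))
    (hl_inf : Tendsto ℓ atTop atTop)
    (hW : ∀ x, W x = ∫ u in (0:ℝ)..x, 1 / w u)
    (Winv : ℝ → ℝ)
    (hWinv_left : ∀ x, 0 ≤ x → Winv (W x) = x)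
    (hWinv_right : ∀ x, 0 ≤ x → W (Winv x) = x)
    (f g finv ginv : ℝ → ℝ)
    (hf_mono : StrictMonoOn f (Set.Ici 0)) (hg_mono : StrictMonoOn g (Set.Ici 0))
    (hf0 : f 0 = 0) (hg0 : g 0 = 0)
    (hf_inf : Tendsto f atTop atTop) (hg_inf : Tendsto g atTop atTop)
    (hf_cont : ContinuousOn f (Set.Ici 0)) (hg_cont : ContinuousOn g (Set.Ici 0))
    (hfinv_left : ∀ x, 0 ≤ x → finv (f x) = x)
    (hfinv_right : ∀ x, 0 ≤ x → f (finv x) = x)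
    (hginv_left : ∀ x, 0 ≤ x → ginv (g x) = x)
    (hginv_right : ∀ x, 0 ≤ x → g (ginv x) = x)
    (Hf Hg : ℝ → ℝ)
    (hHf : ∀ x, Hf x = Winv (∫ u in (0:ℝ)..x, 1 / w (finv u)))
    (hHg : ∀ x, Hg x = Winv (∫ u in (0:ℝ)..x, 1 / w (ginv u))) :
    ((∀ x, 0 ≤ x → f x ≤ g x) → ∀ x, 0 ≤ x → Hf x ≤ Hg x) ∧
    ((∀ᶠ x in atTop, f x ≤ g x) → ¬ BddAbove (Hf '' Set.Ici 0) →
      limsup (fun x => Hf x / Hg x) atTop ≤ 1) :=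
  Hop_monotone_general w ℓ W hw_pos hw_mono hwl hl_inf hW Winv hWinv_left f g finv ginv hf_mono
    hg_mono hf0 hg0 hf_inf hg_inf hf_cont hg_cont hfinv_left hginv_left Hf Hg hHf hHg
end
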